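/- arXiv:2110.02539 — 9 statements merged into one kernel-verified Lean document; each statement's English description precedes it below -/
import Mathlib

section
/- Let p be an odd prime and let Q_p = U(p)^2 = {x^2 : x ∈ U(p)} be the set of nonzero quadratic residues modulo p. Then C_{Q_p}(p) = 3; that is: (i) every sequence (x, y, z) of length 3 in Z_p has a nonempty subsequence of consecutive terms which is a Q_p-weighted zero-sum sequence; and (ii) there exists a sequence of length 2 in Z_p having no nonempty subsequence of consecutive terms which is a Q_p-weighted zero-sum sequence. -/
/-- A list `L` over `ZMod n` is an `A`-weighted zero-sum sequence if there are weights
`a₁, …, a_k ∈ A` (one per term) with `a₁x₁ + ⋯ + a_kx_k = 0`. -/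
def IsWeightedZeroSum {n : ℕ} (A : Set (ZMod n)) (L : List (ZMod n)) : Prop :=
  ∃ a : List (ZMod n), a.length = L.length ∧ (∀ w ∈ a, w ∈ A) ∧
    (List.zipWith (· * ·) a L).sum = 0

/-- `L` has a nonempty subsequence of consecutive terms which is an
`A`-weighted zero-sum sequence. -/
def HasConsecWZS {n : ℕ} (A : Set (ZMod n)) (L : List (ZMod n)) : Prop :=
  ∃ l₁ l₂ l₃ : List (ZMod n), L = l₁ ++ l₂ ++ l₃ ∧ l₂ ≠ [] ∧ IsWeightedZeroSum A l₂

/-- `L` has a nonempty subsequence (not necessarily of consecutive terms) which is an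
`A`-weighted zero-sum sequence. -/
def HasSubWZS {n : ℕ} (A : Set (ZMod n)) (L : List (ZMod n)) : Prop :=
  ∃ l : List (ZMod n), l.Sublist L ∧ l ≠ [] ∧ IsWeightedZeroSum A l

/-!
Let `χ` be the quadratic character of `ZMod p`, so the weights are exactly the `a` with `χ a = 1`.
A single term is a weighted zero sum only if it is `0`, and a pair `(x, y)` with `y ≠ 0` is one
iff `χ (-(x * y)) = 1`. So if no consecutive subsequence of `(x, y, z)` is a weighted zero sum,
then `χ (-(x * y)) = χ (-(y * z)) = -1`, whence `χ (x * z) = 1`. Take a residue `s` with `s + 1`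
a non-residue (otherwise every `k • 1` would be a square); then the residues `s x y² z`,
`-(s + 1) x² y z`, `x² y²` annihilate `(x, y, z)`. For the bound, `(1, -g)` with `g` a
non-residue has no weighted zero-sum consecutive subsequence.
-/

section Consecutive

variable {n : ℕ} {A : Set (ZMod n)}

theorem HasConsecWZS.of_infix {l L : List (ZMod n)} (h : l <:+: L) (hl : l ≠ [])
    (hA : IsWeightedZeroSum A l) : HasConsecWZS A L := by
  obtain ⟨s, t, rfl⟩ := h
  exact ⟨s, l, t, rfl, hl, hA⟩

theorem hasConsecWZS_pair_iff {x y : ZMod n} :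
    HasConsecWZS A [x, y] ↔
      IsWeightedZeroSum A [x] ∨ IsWeightedZeroSum A [y] ∨ IsWeightedZeroSum A [x, y] := by
  have infixes : ∀ l, l <:+: [x, y] → l = [] ∨ l = [x] ∨ l = [y] ∨ l = [x, y] := by
    intro l
    simp only [List.infix_cons_iff, List.prefix_cons_iff, List.infix_nil, List.prefix_nil]
    aesop
  constructor
  · rintro ⟨s, l, t, hL, hl, hA⟩
    rcases infixes l ⟨s, t, hL.symm⟩ with rfl | rfl | rfl | rfl
    exacts [absurd rfl hl, Or.inl hA, Or.inr (Or.inl hA), Or.inr (Or.inr hA)]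
  · rintro (hA | hA | hA)
    exacts [.of_infix ⟨[], [y], rfl⟩ (by simp) hA, .of_infix ⟨[x], [], rfl⟩ (by simp) hA,
      .of_infix (List.infix_refl _) (by simp) hA]

end Consecutive

section Weighted

variable {n : ℕ} {A : Set (ZMod n)} {x y z : ZMod n}

theorem isWeightedZeroSum_singleton_iff : IsWeightedZeroSum A [x] ↔ ∃ a ∈ A, a * x = 0 := by
  constructor
  · rintro ⟨w, hlen, hA, hsum⟩
    obtain ⟨a, rfl⟩ := List.length_eq_one_iff.mp hlen
    exact ⟨a, hA a (by simp), by simpa using hsum⟩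
  · rintro ⟨a, ha, hsum⟩
    exact ⟨[a], rfl, by simpa using ha, by simpa using hsum⟩

theorem isWeightedZeroSum_pair_iff :
    IsWeightedZeroSum A [x, y] ↔ ∃ a ∈ A, ∃ b ∈ A, a * x + b * y = 0 := by
  constructor
  · rintro ⟨w, hlen, hA, hsum⟩
    obtain ⟨a, b, rfl⟩ := List.length_eq_two.mp hlen
    exact ⟨a, hA a (by simp), b, hA b (by simp), by simpa using hsum⟩
  · rintro ⟨a, ha, b, hb, hsum⟩
    exact ⟨[a, b], rfl, by simp [ha, hb], by simpa using hsum⟩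

theorem isWeightedZeroSum_triple_of {a b c : ZMod n} (ha : a ∈ A) (hb : b ∈ A) (hc : c ∈ A)
    (hsum : a * x + b * y + c * z = 0) : IsWeightedZeroSum A [x, y, z] :=
  ⟨[a, b, c], rfl, by simp [ha, hb, hc], by simpa [add_assoc] using hsum⟩

end Weighted

theorem mem_range_units_sq_iff {F : Type*} [Field F] [Fintype F] [DecidableEq F] {x : F} :
    x ∈ Set.range (fun u : Fˣ => (u : F) ^ 2) ↔ quadraticChar F x = 1 := by
  constructor
  · rintro ⟨u, rfl⟩
    exact quadraticChar_sq_one' u.ne_zero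
  · intro hx
    have hx0 : x ≠ 0 := fun h => by simp [h] at hx
    obtain ⟨r, rfl⟩ := (quadraticChar_one_iff_isSquare hx0).mp hx
    exact ⟨Units.mk0 r (left_ne_zero_of_mul hx0), by simp [sq]⟩

namespace ZMod

variable {p : ℕ} [Fact p.Prime]

local notation "χ" => quadraticChar (ZMod p)
local notation "Q" => Set.range (fun u : (ZMod p)ˣ => (u : ZMod p) ^ 2)

theorem exists_quadraticChar_eq_one_and_add_one_eq_neg_one (hp : p ≠ 2) :
    ∃ s : ZMod p, χ s = 1 ∧ χ (s + 1) = -1 := by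
  by_contra! h
  have all_sq : ∀ k : ℕ, IsSquare (k : ZMod p) := by
    intro k
    induction k with
    | zero => exact ⟨0, by simp⟩
    | succ k ih =>
      by_cases hk : (k : ZMod p) = 0
      · exact ⟨1, by simp [hk]⟩
      · have := h _ ((quadraticChar_one_iff_isSquare hk).mpr ih)
        push_cast
        rwa [ne_eq, quadraticChar_neg_one_iff_not_isSquare, not_not] at this
  obtain ⟨g, hg⟩ := FiniteField.exists_nonsquare (F := ZMod p) (by rwa [ringChar_zmod_n])
  exact hg (natCast_zmod_val g ▸ all_sq g.val)

theorem isWeightedZeroSum_units_sq_singleton_iff {x : ZMod p} :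
    IsWeightedZeroSum Q [x] ↔ x = 0 := by
  rw [isWeightedZeroSum_singleton_iff]
  constructor
  · rintro ⟨_, ⟨u, rfl⟩, hx⟩
    exact (mul_eq_zero.mp hx).resolve_left (pow_ne_zero 2 u.ne_zero)
  · rintro rfl
    exact ⟨1, ⟨1, by simp⟩, mul_zero 1⟩

theorem isWeightedZeroSum_units_sq_pair_iff {x y : ZMod p} (hy : y ≠ 0) :
    IsWeightedZeroSum Q [x, y] ↔ χ (-(x * y)) = 1 := by
  simp only [isWeightedZeroSum_pair_iff, mem_range_units_sq_iff]
  constructor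
  · rintro ⟨a, ha, b, hb, hsum⟩
    have key := congrArg χ (show a * (-(x * y)) = b * y ^ 2 by linear_combination -y * hsum)
    rwa [map_mul, map_mul, ha, hb, quadraticChar_sq_one' hy, one_mul, one_mul] at key
  · intro hxy
    exact ⟨y ^ 2, quadraticChar_sq_one' hy, -(x * y), hxy, by ring⟩

theorem isWeightedZeroSum_units_sq_triple (hp : p ≠ 2) {x y z : ZMod p}
    (hx : x ≠ 0) (hy : y ≠ 0) (hxy : χ (-(x * y)) = -1) (hyz : χ (-(y * z)) = -1) :
    IsWeightedZeroSum Q [x, y, z] := by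
  obtain ⟨s, hs, hs1⟩ := exists_quadraticChar_eq_one_and_add_one_eq_neg_one hp
  have hxz : χ (x * z) = 1 := by
    have key : χ (x * z) * χ (y ^ 2) = χ (-(x * y)) * χ (-(y * z)) := by
      simp only [← map_mul]
      ring_nf
    rwa [quadraticChar_sq_one' hy, hxy, hyz, mul_one, neg_mul_neg, mul_one] at key
  refine isWeightedZeroSum_triple_of (a := s * (x * z) * y ^ 2)
    (b := (s + 1) * -(y * z) * x ^ 2) (c := (x * y) ^ 2) ?_ ?_ ?_ (by ring)
  · rw [mem_range_units_sq_iff, map_mul, map_mul, hs, hxz, quadraticChar_sq_one' hy, one_mul,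
      one_mul]
  · rw [mem_range_units_sq_iff, map_mul, map_mul, hs1, hyz, quadraticChar_sq_one' hx,
      neg_mul_neg, one_mul, mul_one]
  · exact ⟨Units.mk0 _ (mul_ne_zero hx hy), rfl⟩

theorem hasConsecWZS_units_sq_of_length_eq_three (hp : p ≠ 2) {L : List (ZMod p)}
    (hL : L.length = 3) : HasConsecWZS Q L := by
  obtain ⟨x, y, z, rfl⟩ := List.length_eq_three.mp hL
  have single : ∀ {w : ZMod p}, w = 0 → IsWeightedZeroSum Q [w] :=
    isWeightedZeroSum_units_sq_singleton_iff.mpr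
  by_cases hx : x = 0
  · exact .of_infix ⟨[], [y, z], rfl⟩ (by simp) (single hx)
  by_cases hy : y = 0
  · exact .of_infix ⟨[x], [z], rfl⟩ (by simp) (single hy)
  by_cases hz : z = 0
  · exact .of_infix ⟨[x, y], [], rfl⟩ (by simp) (single hz)
  by_cases hxy : χ (-(x * y)) = 1
  · exact .of_infix ⟨[], [z], rfl⟩ (by simp)
      ((isWeightedZeroSum_units_sq_pair_iff hy).mpr hxy)
  by_cases hyz : χ (-(y * z)) = 1
  · exact .of_infix ⟨[x], [], rfl⟩ (by simp)
      ((isWeightedZeroSum_units_sq_pair_iff hz).mpr hyz)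
  have neg_one : ∀ {w : ZMod p}, w ≠ 0 → χ w ≠ 1 → χ w = -1 := fun hw h1 =>
    (quadraticChar_dichotomy hw).resolve_left h1
  exact .of_infix (List.infix_refl _) (by simp) <| isWeightedZeroSum_units_sq_triple hp hx hy
    (neg_one (by simp [hx, hy]) hxy) (neg_one (by simp [hy, hz]) hyz)

theorem exists_length_eq_two_not_hasConsecWZS_units_sq (hp : p ≠ 2) :
    ∃ L : List (ZMod p), L.length = 2 ∧ ¬ HasConsecWZS Q L := by
  obtain ⟨g, hg⟩ := FiniteField.exists_nonsquare (F := ZMod p) (by rwa [ringChar_zmod_n])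
  have hg0 : g ≠ 0 := by rintro rfl; exact hg ⟨0, by simp⟩
  refine ⟨[1, -g], rfl, ?_⟩
  rw [hasConsecWZS_pair_iff, isWeightedZeroSum_units_sq_singleton_iff,
    isWeightedZeroSum_units_sq_singleton_iff,
    isWeightedZeroSum_units_sq_pair_iff (neg_ne_zero.mpr hg0)]
  simp [hg0, quadraticChar_neg_one_iff_not_isSquare.mpr hg]

end ZMod

/-- For an odd prime `p` and `Q_p = U(p)²` the nonzero quadratic residues
mod `p`, we have `C_{Q_p}(p) = 3`. -/
theorem C_of_squares_prime (p : ℕ) (hp : p.Prime) (hodd : p ≠ 2) :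
    (∀ L : List (ZMod p), L.length = 3 →
      HasConsecWZS {x : ZMod p | ∃ u : (ZMod p)ˣ, (u : ZMod p) ^ 2 = x} L) ∧
    (∃ L : List (ZMod p), L.length = 2 ∧
      ¬ HasConsecWZS {x : ZMod p | ∃ u : (ZMod p)ˣ, (u : ZMod p) ^ 2 = x} L) := by
  have := Fact.mk hp
  exact ⟨fun _ => ZMod.hasConsecWZS_units_sq_of_length_eq_three hodd,
    ZMod.exists_length_eq_two_not_hasConsecWZS_units_sq hodd⟩
end

section
/- Let p be a prime with p ≡ 1 (mod 3) and p ≠ 7, 13. Suppose S = (x_1, …, x_k) is a sequence in Z_p such that at least three terms of S lie in U(p) (i.e., are nonzero). Then S is a U(p)^3-weighted zero-sum sequence. -/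
/-!
Fix a character `χ` of order `3` on `𝔽_q`, which exists because `3 ∣ q - 1`. Since `∑_{i<3} χⁱ(y)`
vanishes unless `y` is a nonzero cube, the sum
`∑_{i,j<3} χⁱ(a⁻¹) χʲ(b⁻¹) J(χⁱ, χʲ) = ∑_x (∑_i χⁱ(a⁻¹x)) (∑_j χʲ(b⁻¹(1 - x)))`
vanishes when `a u³ + b v³ = 1` has no solution in units. But its term `J(1, 1) = q - 2` outweighs
the other eight: `|J(χ, χ)| = |J(χ², χ²)| = √q` and the remaining six have absolute value `1`, so
their total is at most `6 + 2√q < q - 2` once `q > 16`. Hence `x u³ + y v³ + z w³ = t` is solvable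
in units for all nonzero `x, y, z` and every `t`; weighting three nonzero terms of a sequence by
`u³, v³, w³` and all other terms by `1`, with `t` chosen to cancel the other terms, gives a
zero sum.
-/

open Finset

variable {F : Type*} [Field F] [Fintype F]

namespace MulChar

lemma sum_range_pow_apply_eq_zero {M R : Type*} [CommMonoid M] [CommRing R] [IsDomain R]
    {χ : MulChar M R} {n : ℕ} (hχ : χ ^ n = 1) {x : M} (hx : ¬(IsUnit x ∧ χ x = 1)) :
    ∑ i ∈ range n, (χ ^ i) x = 0 := by
  by_cases hu : IsUnit x
  · obtain ⟨u, rfl⟩ := hu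
    have hgeom := geom_sum_mul (χ u) n
    rw [← pow_apply_coe, hχ, one_apply_coe, sub_self] at hgeom
    simp_rw [pow_apply_coe]
    exact (mul_eq_zero.mp hgeom).resolve_right (sub_ne_zero.mpr fun h ↦ hx ⟨u.isUnit, h⟩)
  · exact sum_eq_zero fun i _ ↦ map_nonunit _ hu

lemma norm_apply_coe_eq_one {M E : Type*} [CommMonoid M] [Finite Mˣ] [NormedField E]
    (χ : MulChar M E) (u : Mˣ) : ‖χ u‖ = 1 := by
  refine (pow_eq_one_iff_of_nonneg (norm_nonneg _) (Nat.card_pos (α := Mˣ)).ne').mp ?_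
  rw [← norm_pow, ← map_pow, ← Units.val_pow_eq_pow_val, pow_card_eq_one', Units.val_one, map_one,
    norm_one]

lemma exists_pow_eq_of_apply_eq_one {R : Type*} [CommMonoidWithZero R] {χ : MulChar F R} {n : ℕ}
    (hχ : orderOf χ = n) {x : F} (hx : IsUnit x) (h : χ x = 1) : ∃ v : Fˣ, (v : F) ^ n = x := by
  obtain ⟨g, hg⟩ := IsCyclic.exists_generator (α := Fˣ)
  have hord : orderOf (χ g) = n := by
    rw [← hχ, orderOf_eq_orderOf_iff]
    intro k
    rw [← pow_apply_coe, eq_iff hg (χ ^ k) 1, one_apply_coe]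
  obtain ⟨u, rfl⟩ := hx
  obtain ⟨k, rfl⟩ := mem_powers_iff_mem_zpowers.mpr (hg u)
  rw [Units.val_pow_eq_pow_val, map_pow] at h
  obtain ⟨m, rfl⟩ := hord ▸ orderOf_dvd_of_pow_eq_one h
  exact ⟨g ^ m, by rw [← Units.val_pow_eq_pow_val, ← pow_mul, mul_comm]⟩

end MulChar

lemma norm_jacobiSum {χ ψ : MulChar F ℂ} (hχ : χ ≠ 1) (hψ : ψ ≠ 1) (hχψ : χ * ψ ≠ 1) :
    ‖jacobiSum χ ψ‖ = √(Fintype.card F) := by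
  have hchar : ringChar ℂ ≠ ringChar F := by
    simpa only [ringChar.eq_zero] using (CharP.ringChar_ne_zero_of_finite F).symm
  have h := jacobiSum_mul_jacobiSum_inv hchar hχ hψ hχψ
  have hconj : starRingEnd ℂ (jacobiSum χ ψ) = jacobiSum χ⁻¹ ψ⁻¹ := by
    simp only [jacobiSum, map_sum, map_mul, ← MulChar.star_apply']
    rfl
  rw [← hconj, Complex.mul_conj, ← Complex.ofReal_natCast, Complex.ofReal_inj,
    Complex.normSq_eq_norm_sq] at h
  rw [← h, Real.sqrt_sq (norm_nonneg _)]

lemma sum_pow_mul_jacobiSum_eq {R : Type*} [CommRing R] (χ : MulChar F R) (n : ℕ) (a b : F) :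
    ∑ i ∈ range n, ∑ j ∈ range n, (χ ^ i) a * (χ ^ j) b * jacobiSum (χ ^ i) (χ ^ j) =
      ∑ x, (∑ i ∈ range n, (χ ^ i) (a * x)) * ∑ j ∈ range n, (χ ^ j) (b * (1 - x)) := by
  simp_rw [sum_mul_sum, jacobiSum, mul_sum, map_mul]
  rw [sum_comm_cycle]
  exact sum_congr rfl fun x _ ↦ sum_congr rfl fun i _ ↦ sum_congr rfl fun j _ ↦ by ring

lemma sum_range_three_pow_mul_jacobiSum_eq {R : Type*} [CommRing R] [IsDomain R]
    {χ : MulChar F R} (hχ : χ ≠ 1) (hχ2 : χ ^ 2 ≠ 1) (a b : Fˣ) :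
    ∑ i ∈ range 3, ∑ j ∈ range 3, (χ ^ i) a * (χ ^ j) b * jacobiSum (χ ^ i) (χ ^ j) =
      (Fintype.card F - 2) + (χ a * χ b * jacobiSum χ χ +
        χ a ^ 2 * χ b ^ 2 * jacobiSum (χ ^ 2) (χ ^ 2) +
        (χ a * χ b ^ 2 + χ a ^ 2 * χ b) * jacobiSum χ (χ ^ 2) -
        (χ a + χ a ^ 2 + χ b + χ b ^ 2)) := by
  simp only [sum_range_succ, range_zero, sum_empty, zero_add, pow_zero, pow_one,
    MulChar.pow_apply_coe]
  rw [jacobiSum_comm (χ ^ 2) χ, jacobiSum_comm χ 1, jacobiSum_comm (χ ^ 2) 1, jacobiSum_one_one,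
    jacobiSum_one_nontrivial hχ, jacobiSum_one_nontrivial hχ2]
  ring

lemma sum_pow_mul_jacobiSum_ne_zero_of_orderOf_eq_three {χ : MulChar F ℂ} (hχ : orderOf χ = 3)
    (hF : 16 < Fintype.card F) (a b : Fˣ) :
    ∑ i ∈ range 3, ∑ j ∈ range 3, (χ ^ i) a * (χ ^ j) b * jacobiSum (χ ^ i) (χ ^ j) ≠ 0 := by
  have hχ1 : χ ≠ 1 := by rintro rfl; simp at hχ
  have hχ2 : χ ^ 2 ≠ 1 := fun h ↦ by
    have := orderOf_dvd_of_pow_eq_one h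
    rw [hχ] at this
    norm_num at this
  have hχ3 : χ ^ 3 = 1 := hχ ▸ pow_orderOf_eq_one χ
  have hε : ‖jacobiSum χ (χ ^ 2)‖ = 1 := by
    have hinv : χ ^ 2 = χ⁻¹ := eq_inv_of_mul_eq_one_right (by rw [← pow_succ', hχ3])
    rw [hinv, jacobiSum_nontrivial_inv hχ1, norm_neg, ← Units.coe_neg_one]
    exact χ.norm_apply_coe_eq_one _
  have hJ₁ : ‖jacobiSum χ χ‖ = √(Fintype.card F) := norm_jacobiSum hχ1 hχ1 (by rwa [← sq])
  have hJ₂ : ‖jacobiSum (χ ^ 2) (χ ^ 2)‖ = √(Fintype.card F) :=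
    norm_jacobiSum hχ2 hχ2 (by rwa [← pow_add, pow_succ, hχ3, one_mul])
  rw [sum_range_three_pow_mul_jacobiSum_eq hχ1 hχ2]
  set q := Fintype.card F
  set α := χ a
  set β := χ b
  have hα : ‖α‖ = 1 := χ.norm_apply_coe_eq_one a
  have hβ : ‖β‖ = 1 := χ.norm_apply_coe_eq_one b
  have hbound : ‖α * β * jacobiSum χ χ + α ^ 2 * β ^ 2 * jacobiSum (χ ^ 2) (χ ^ 2) +
      (α * β ^ 2 + α ^ 2 * β) * jacobiSum χ (χ ^ 2) - (α + α ^ 2 + β + β ^ 2)‖ ≤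
        √q + √q + 2 + 4 := by
    refine (norm_sub_le _ _).trans (add_le_add (norm_add₃_le.trans ?_) (norm_add₄_le.trans ?_))
    · gcongr
      · simp [hα, hβ, hJ₁]
      · simp [hα, hβ, hJ₂]
      · rw [norm_mul, hε, mul_one]
        exact (norm_add_le _ _).trans (by norm_num [hα, hβ])
    · norm_num [hα, hβ]
  intro h0
  have hq : (q : ℝ) - 2 ≤ √q + √q + 2 + 4 := by
    rw [eq_neg_of_add_eq_zero_right h0, norm_neg] at hbound
    refine le_trans ?_ hbound
    simpa using norm_sub_norm_le (q : ℂ) 2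
  have hq17 : (17 : ℝ) ≤ q := by exact_mod_cast hF
  nlinarith [Real.sq_sqrt (Nat.cast_nonneg q), Real.sqrt_nonneg q]

theorem exists_units_mul_cube_add_mul_cube_eq_one (hF3 : 3 ∣ Fintype.card F - 1)
    (hF : 16 < Fintype.card F) (a b : Fˣ) : ∃ u v : Fˣ, (a * u ^ 3 + b * v ^ 3 : F) = 1 := by
  obtain ⟨χ, hχ⟩ := MulChar.exists_mulChar_orderOf F hF3
    (Complex.isPrimitiveRoot_exp 3 (by norm_num))
  have hχ3 : χ ^ 3 = 1 := hχ ▸ pow_orderOf_eq_one χ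
  by_contra hno
  refine sum_pow_mul_jacobiSum_ne_zero_of_orderOf_eq_three hχ hF a⁻¹ b⁻¹ ?_
  rw [sum_pow_mul_jacobiSum_eq]
  refine sum_eq_zero fun x _ ↦ ?_
  by_cases hx : IsUnit (↑a⁻¹ * x) ∧ χ (↑a⁻¹ * x) = 1
  · by_cases hy : IsUnit (↑b⁻¹ * (1 - x)) ∧ χ (↑b⁻¹ * (1 - x)) = 1
    · obtain ⟨u, hu⟩ := χ.exists_pow_eq_of_apply_eq_one hχ hx.1 hx.2
      obtain ⟨v, hv⟩ := χ.exists_pow_eq_of_apply_eq_one hχ hy.1 hy.2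
      refine absurd ⟨u, v, ?_⟩ hno
      rw [hu, hv, ← mul_assoc, ← mul_assoc, Units.mul_inv, Units.mul_inv]
      ring
    · rw [MulChar.sum_range_pow_apply_eq_zero hχ3 hy, mul_zero]
  · rw [MulChar.sum_range_pow_apply_eq_zero hχ3 hx, zero_mul]

theorem exists_units_mul_cube_add_mul_cube_add_mul_cube_eq (hF3 : 3 ∣ Fintype.card F - 1)
    (hF : 16 < Fintype.card F) (x y z : Fˣ) (t : F) :
    ∃ u v w : Fˣ, (x * u ^ 3 + y * v ^ 3 + z * w ^ 3 : F) = t := by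
  obtain ⟨w, hw⟩ : ∃ w : Fˣ, t - z * w ^ 3 ≠ 0 := by
    by_cases htz : t - z = 0
    -- a solution of `u³ + v³ = 1` supplies a cube `u³ ≠ 1`
    · obtain ⟨u, v, huv⟩ := exists_units_mul_cube_add_mul_cube_eq_one hF3 hF 1 1
      simp only [Units.val_one, one_mul] at huv
      have hzv : t - z * u ^ 3 = z * v ^ 3 := by linear_combination htz - z * huv
      exact ⟨u, hzv ▸ mul_ne_zero z.ne_zero (pow_ne_zero 3 v.ne_zero)⟩
    · exact ⟨1, by simpa using htz⟩
  set c := Units.mk0 _ hw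
  obtain ⟨u, v, huv⟩ := exists_units_mul_cube_add_mul_cube_eq_one hF3 hF (x * c⁻¹) (y * c⁻¹)
  refine ⟨u, v, w, ?_⟩
  have hxy : (x * u ^ 3 + y * v ^ 3 : F) = c := by
    push_cast at huv
    field_simp at huv
    exact huv
  rw [hxy, Units.val_mk0]
  ring

theorem List.Sublist.exists_zipWith_mul_sum_eq {R : Type*} [CommRing R] {M L : List R}
    (h : M.Sublist L) (b : List R) (hb : b.length = M.length) :
    ∃ a : List R, a.length = L.length ∧ (∀ w ∈ a, w ∈ b ∨ w = 1) ∧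
      (List.zipWith (· * ·) a L).sum = (List.zipWith (· * ·) b M).sum + (L.sum - M.sum) := by
  induction h generalizing b with
  | slnil => exact ⟨[], rfl, by simp, by simp [List.length_eq_zero_iff.mp hb]⟩
  | cons x _ ih =>
    obtain ⟨a, hlen, hmem, hsum⟩ := ih b hb
    refine ⟨1 :: a, by simp [hlen], ?_, ?_⟩
    · simpa using hmem
    · simp only [List.zipWith_cons_cons, List.sum_cons, hsum]
      ring
  | cons_cons x _ ih =>
    obtain ⟨c, b, rfl⟩ := List.exists_cons_of_length_eq_add_one hb
    obtain ⟨a, hlen, hmem, hsum⟩ := ih b (by simpa using hb)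
    refine ⟨c :: a, by simp [hlen], ?_, ?_⟩
    · simp only [List.mem_cons, forall_eq_or_imp, true_or, true_and]
      exact fun w hw ↦ (hmem w hw).imp_left .inr
    · simp only [List.zipWith_cons_cons, List.sum_cons, hsum]
      ring

theorem IsWeightedZeroSum.of_sublist {n : ℕ} {A : Set (ZMod n)} (hA : 1 ∈ A)
    {M L : List (ZMod n)} (hML : M.Sublist L)
    (hM : ∀ t, ∃ b : List (ZMod n), b.length = M.length ∧ (∀ w ∈ b, w ∈ A) ∧
      (List.zipWith (· * ·) b M).sum = t) :
    IsWeightedZeroSum A L := by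
  obtain ⟨b, hlen, hmem, hsum⟩ := hM (M.sum - L.sum)
  obtain ⟨a, hlen', hmem', hsum'⟩ := hML.exists_zipWith_mul_sum_eq b hlen
  refine ⟨a, hlen', fun w hw ↦ (hmem' w hw).elim (hmem w) (· ▸ hA), ?_⟩
  rw [hsum', hsum]
  ring

/-- Let `p` be a prime with `p ≡ 1 (mod 3)`, `p ≠ 7, 13`. Any sequence in
`Z_p` with at least three nonzero terms is a `U(p)³`-weighted zero-sum sequence. -/
theorem cubes_wzs_of_three_units (p : ℕ) (hp : p.Prime) (hmod : p % 3 = 1)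
    (h7 : p ≠ 7) (h13 : p ≠ 13) (S : List (ZMod p))
    (hthree : ∃ T : List (ZMod p), T.Sublist S ∧ T.length = 3 ∧ ∀ x ∈ T, x ≠ 0) :
    IsWeightedZeroSum {x : ZMod p | ∃ u : (ZMod p)ˣ, (u : ZMod p) ^ 3 = x} S := by
  have := Fact.mk hp
  have hp16 : 16 < p := by
    by_contra! h
    interval_cases p <;> simp_all (decide := true)
  obtain ⟨T, hTS, hT3, hT0⟩ := hthree
  obtain ⟨x, y, z, rfl⟩ := List.length_eq_three.mp hT3
  refine IsWeightedZeroSum.of_sublist ?_ hTS fun t ↦ ?_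
  · exact ⟨1, by simp⟩
  obtain ⟨u, v, w, h⟩ := exists_units_mul_cube_add_mul_cube_add_mul_cube_eq
    (by rw [ZMod.card]; omega) (by rwa [ZMod.card])
    (.mk0 x (hT0 x (by simp))) (.mk0 y (hT0 y (by simp))) (.mk0 z (hT0 z (by simp))) t
  refine ⟨[u ^ 3, v ^ 3, w ^ 3], rfl, by simp, ?_⟩
  simpa [mul_comm, add_assoc] using h
end

section
/- Let p be a prime with p ≡ 1 (mod 3) and p ≠ 7. Then C_{U(p)^3}(p) = 3; that is: (i) every sequence (x, y, z) of length 3 in Z_p has a nonempty subsequence of consecutive terms which is a U(p)^3-weighted zero-sum sequence; and (ii) there exists a sequence of length 2 in Z_p having no nonempty subsequence of consecutive terms which is a U(p)^3-weighted zero-sum sequence. -/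
/-!
For `p ≥ 17`, take a cubic character `χ` of `𝔽_p`. Since `∑ i < 3, χ^i` is three times the
indicator of the nonzero cubes, counting the points `(u, v)` with `u`, `v` nonzero cubes on a line
`v = a + b u` (`a, b ≠ 0`) gives a combination of the nine Jacobi sums `J(χ^i, χ^j)`. The term
`J(1, 1) = p - 2` dominates the others, which have absolute value `1` or `√p`, so such points
exist. Hence `1 + u r + v s = 0` has a solution in nonzero cubes, and every `(x, y, z)` with
nonzero terms, being `x • (1, y/x, z/x)`, is itself a weighted zero-sum. For `p = 13` one of
`(x, y)`, `(y, z)`, `(x, y, z)` works by a finite check. Conversely, as `-1` is a cube, `(1, g)`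
has no weighted zero-sum block when `g` is not a cube, and non-cubes exist because `3 ∣ p - 1`.
-/

open Finset

theorem List.eq_of_isInfix_pair {α : Type*} {l : List α} {a b : α} (h : l <:+: [a, b])
    (hl : l ≠ []) : l = [a] ∨ l = [b] ∨ l = [a, b] := by
  simp only [infix_cons_iff, prefix_cons_iff, hl, prefix_nil, exists_eq_right, false_or,
    infix_nil, or_false] at h
  rcases h with ⟨t, rfl, rfl | rfl⟩ | rfl <;> simp

section WeightedZeroSum

variable {n : ℕ} {A : Set (ZMod n)}

theorem isWeightedZeroSum_singleton {x : ZMod n} :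
    IsWeightedZeroSum A [x] ↔ ∃ a ∈ A, a * x = 0 := by
  constructor
  · rintro ⟨w, hw, hA, hsum⟩
    obtain ⟨a, rfl⟩ := List.length_eq_one_iff.mp hw
    exact ⟨a, hA a (by simp), by simpa using hsum⟩
  · rintro ⟨a, ha, h⟩
    exact ⟨[a], rfl, by simpa using ha, by simpa using h⟩

theorem isWeightedZeroSum_pair {x y : ZMod n} :
    IsWeightedZeroSum A [x, y] ↔ ∃ a ∈ A, ∃ b ∈ A, a * x + b * y = 0 := by
  constructor
  · rintro ⟨w, hw, hA, hsum⟩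
    obtain ⟨a, b, rfl⟩ := List.length_eq_two.mp hw
    exact ⟨a, hA a (by simp), b, hA b (by simp), by simpa using hsum⟩
  · rintro ⟨a, ha, b, hb, h⟩
    exact ⟨[a, b], rfl, by simp [ha, hb], by simpa using h⟩

theorem isWeightedZeroSum_triple {x y z : ZMod n} :
    IsWeightedZeroSum A [x, y, z] ↔
      ∃ a ∈ A, ∃ b ∈ A, ∃ c ∈ A, a * x + b * y + c * z = 0 := by
  constructor
  · rintro ⟨w, hw, hA, hsum⟩
    obtain ⟨a, b, c, rfl⟩ := List.length_eq_three.mp hw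
    exact ⟨a, hA a (by simp), b, hA b (by simp), c, hA c (by simp), by simpa [add_assoc] using hsum⟩
  · rintro ⟨a, ha, b, hb, c, hc, h⟩
    exact ⟨[a, b, c], rfl, by simp [ha, hb, hc], by simpa [add_assoc] using h⟩

theorem IsWeightedZeroSum.map_mul {L : List (ZMod n)} (h : IsWeightedZeroSum A L) (c : ZMod n) :
    IsWeightedZeroSum A (L.map (c * ·)) := by
  obtain ⟨a, hlen, hA, hsum⟩ := h
  refine ⟨a, by simpa using hlen, hA, ?_⟩
  have hmap : List.zipWith (· * ·) a (L.map (c * ·)) = (List.zipWith (· * ·) a L).map (c * ·) := by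
    rw [List.zipWith_map_right, List.map_zipWith]
    simp only [mul_left_comm]
  rw [hmap]
  exact (List.sum_map_mul_left _ id c).trans (by rw [List.map_id, hsum, mul_zero])

theorem hasConsecWZS_iff {L : List (ZMod n)} :
    HasConsecWZS A L ↔ ∃ l, l <:+: L ∧ l ≠ [] ∧ IsWeightedZeroSum A l :=
  ⟨fun ⟨s, l, t, h, hl, hw⟩ => ⟨l, ⟨s, t, h.symm⟩, hl, hw⟩,
    fun ⟨l, ⟨s, t, h⟩, hl, hw⟩ => ⟨s, l, t, h.symm, hl, hw⟩⟩

theorem HasConsecWZS.map_mul {L : List (ZMod n)} (h : HasConsecWZS A L) (c : ZMod n) :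
    HasConsecWZS A (L.map (c * ·)) := by
  obtain ⟨l, hl, hne, hw⟩ := hasConsecWZS_iff.mp h
  exact hasConsecWZS_iff.mpr ⟨_, hl.map _, by simpa using hne, hw.map_mul c⟩

theorem hasConsecWZS_of_zero_mem {L : List (ZMod n)} {a : ZMod n} (ha : a ∈ A) (h0 : 0 ∈ L) :
    HasConsecWZS A L :=
  hasConsecWZS_iff.mpr ⟨[0], (List.singleton_infix_iff _ _).mpr h0, by simp,
    isWeightedZeroSum_singleton.mpr ⟨a, ha, mul_zero a⟩⟩

end WeightedZeroSum

def unitCubes (M : Type*) [Monoid M] : Set M := Set.range fun u : Mˣ => (u : M) ^ 3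

section unitCubes

theorem one_mem_unitCubes {M : Type*} [Monoid M] : (1 : M) ∈ unitCubes M := ⟨1, by simp⟩

theorem pow_three_mem_unitCubes {G : Type*} [GroupWithZero G] {w : G} (hw : w ≠ 0) :
    w ^ 3 ∈ unitCubes G :=
  ⟨Units.mk0 w hw, rfl⟩

theorem ne_zero_of_mem_unitCubes {M : Type*} [MonoidWithZero M] [Nontrivial M] {x : M}
    (hx : x ∈ unitCubes M) : x ≠ 0 := by
  obtain ⟨u, rfl⟩ := hx
  show (u : M) ^ 3 ≠ 0
  exact_mod_cast (u ^ (3 : ℕ)).ne_zero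

theorem neg_div_mem_unitCubes {K : Type*} [Field K] {x y : K} (hx : x ∈ unitCubes K)
    (hy : y ∈ unitCubes K) : -(x / y) ∈ unitCubes K := by
  obtain ⟨u, rfl⟩ := hx
  obtain ⟨v, rfl⟩ := hy
  exact ⟨-(u / v), by push_cast; ring⟩

end unitCubes

namespace MulChar

theorem norm_apply_of_isUnit {R K : Type*} [CommMonoid R] [Finite Rˣ] [NormedField K]
    (χ : MulChar R K) {x : R} (hx : IsUnit x) : ‖χ x‖ = 1 := by
  obtain ⟨u, rfl⟩ := hx
  refine (pow_eq_one_iff_of_nonneg (norm_nonneg _) (Nat.card_pos (α := Rˣ)).ne').mp ?_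
  rw [← norm_pow, ← map_pow, ← Units.val_pow_eq_pow_val, pow_card_eq_one', Units.val_one,
    map_one, norm_one]

theorem apply_eq_one_of_mem_unitCubes {R R' : Type*} [CommMonoid R] [CommMonoidWithZero R']
    {χ : MulChar R R'} (hχ : χ ^ 3 = 1) {x : R} (hx : x ∈ unitCubes R) : χ x = 1 := by
  obtain ⟨u, rfl⟩ := hx
  rw [map_pow, ← pow_apply_coe, hχ, one_apply_coe]

variable {F : Type*} [Field F] [Finite F]

theorem mem_unitCubes_of_apply_eq_one {R : Type*} [CommMonoidWithZero R] {χ : MulChar F R}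
    (hχ : orderOf χ = 3) (u : Fˣ) (hu : χ u = 1) : (u : F) ∈ unitCubes F := by
  obtain ⟨g, hg⟩ := IsCyclic.exists_monoid_generator (α := Fˣ)
  have hg3 : χ g ^ 3 = 1 := by rw [← pow_apply_coe, ← hχ, pow_orderOf_eq_one, one_apply_coe]
  have hg1 : χ g ≠ 1 := by
    intro h
    have : χ = 1 := (eq_iff (fun x => mem_powers_iff_mem_zpowers.mp (hg x)) χ 1).mpr <| by
      rw [h, one_apply_coe]
    simp [this] at hχ
  obtain ⟨k, rfl⟩ := Submonoid.mem_powers_iff _ _ |>.mp (hg u)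
  obtain ⟨m, rfl⟩ : 3 ∣ k := by
    rw [← orderOf_eq_prime hg3 hg1]
    apply orderOf_dvd_of_pow_eq_one
    rwa [Units.val_pow_eq_pow_val, map_pow] at hu
  exact ⟨g ^ m, by push_cast; ring⟩

theorem sum_pow_apply_eq_zero_of_not_mem_unitCubes {R : Type*} [CommRing R] [IsDomain R]
    {χ : MulChar F R} (hχ : orderOf χ = 3) {x : F} (hx : x ∉ unitCubes F) :
    ∑ i ∈ range 3, (χ ^ i) x = 0 := by
  by_cases hx0 : x = 0
  · simp [hx0]
  obtain ⟨u, rfl⟩ : IsUnit x := isUnit_iff_ne_zero.mpr hx0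
  have h1 : χ u ≠ 1 := fun h => hx (mem_unitCubes_of_apply_eq_one hχ u h)
  have h3 : χ u ^ 3 = 1 := by rw [← pow_apply_coe, ← hχ, pow_orderOf_eq_one, one_apply_coe]
  simp_rw [pow_apply_coe]
  exact (orderOf_eq_prime h3 h1 ▸ IsPrimitiveRoot.orderOf (χ u)).geom_sum_eq_zero (by norm_num)

end MulChar

section JacobiSum

variable {F : Type*} [Field F] [Fintype F]

theorem sum_mul_apply_add_mul_eq_jacobiSum {R : Type*} [CommRing R] (ψ φ : MulChar F R)
    {a b : F} (ha : a ≠ 0) (hb : b ≠ 0) :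
    ∑ x, ψ x * φ (a + b * x) = ψ (-a / b) * φ a * jacobiSum ψ φ := by
  have hc : -a / b ≠ 0 := div_ne_zero (neg_ne_zero.mpr ha) hb
  calc ∑ x, ψ x * φ (a + b * x) = ∑ t, ψ (-a / b * t) * φ (a + b * (-a / b * t)) :=
        (Fintype.sum_bijective _ (mulLeft_bijective₀ _ hc) _ _ fun _ => rfl).symm
    _ = ∑ t, ψ (-a / b) * φ a * (ψ t * φ (1 - t)) := by
        refine sum_congr rfl fun t _ => ?_
        rw [show a + b * (-a / b * t) = a * (1 - t) by field_simp; ring, map_mul, map_mul]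
        ring
    _ = _ := by rw [jacobiSum, mul_sum]

theorem norm_jacobiSum_eq_sqrt {ψ φ : MulChar F ℂ} (hψ : ψ ≠ 1) (hφ : φ ≠ 1)
    (hψφ : ψ * φ ≠ 1) : ‖jacobiSum ψ φ‖ = √(Fintype.card F) := by
  have hchar : ringChar ℂ ≠ ringChar F := by
    rw [ringChar.eq_zero]
    exact (CharP.char_ne_zero_of_finite F (ringChar F)).symm
  have hconj : jacobiSum ψ⁻¹ φ⁻¹ = starRingEnd ℂ (jacobiSum ψ φ) := by
    simp only [jacobiSum, map_sum, map_mul, starRingEnd_apply, MulChar.star_apply']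
  have h := jacobiSum_mul_jacobiSum_inv hchar hψ hφ hψφ
  rw [hconj, Complex.mul_conj'] at h
  rw [← Real.sqrt_sq (norm_nonneg (jacobiSum ψ φ))]
  congr 1
  exact_mod_cast h

end JacobiSum

section Cubic

variable {F : Type*} [Field F] [Fintype F] {χ : MulChar F ℂ}

theorem norm_jacobiSum_pow_le (hχ : orderOf χ = 3) {i j : ℕ} (hi : i < 3) (hj : j < 3)
    (hij : (i, j) ≠ (0, 0)) :
    ‖jacobiSum (χ ^ i) (χ ^ j)‖ ≤ if i = j then √(Fintype.card F) else 1 := by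
  have hne : ∀ k, ¬ 3 ∣ k → χ ^ k ≠ 1 := fun k hk h => hk (hχ ▸ orderOf_dvd_of_pow_eq_one h)
  have hχ1 : χ ≠ 1 := by simpa using hne 1
  have hχ2 : χ ^ 2 ≠ 1 := hne 2 (by norm_num)
  have hχ3 : χ ^ 3 = 1 := hχ ▸ pow_orderOf_eq_one χ
  have hinv : χ ^ 2 = χ⁻¹ := by
    rwa [eq_inv_iff_mul_eq_one, ← pow_succ]
  have hχm1 : ‖χ (-1)‖ = 1 := χ.norm_apply_of_isUnit isUnit_one.neg
  interval_cases i <;> interval_cases j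
  · exact absurd rfl hij
  · simp [jacobiSum_one_nontrivial hχ1]
  · simp [jacobiSum_one_nontrivial hχ2]
  · simp [jacobiSum_comm χ, jacobiSum_one_nontrivial hχ1]
  · simp [norm_jacobiSum_eq_sqrt hχ1 hχ1 (by rwa [← sq])]
  · simp [hinv, jacobiSum_nontrivial_inv hχ1, hχm1]
  · simp [jacobiSum_comm (χ ^ 2), jacobiSum_one_nontrivial hχ2]
  · simp [jacobiSum_comm, hinv, jacobiSum_nontrivial_inv hχ1, hχm1]
  · refine (norm_jacobiSum_eq_sqrt hχ2 hχ2 ?_).le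
    rw [← pow_add]
    exact hne 4 (by norm_num)

theorem norm_sum_pow_apply_mul_jacobiSum_sub_le (hχ : orderOf χ = 3) {c d : F} (hc : c ≠ 0)
    (hd : d ≠ 0) :
    ‖∑ i ∈ range 3, ∑ j ∈ range 3, (χ ^ i) c * (χ ^ j) d * jacobiSum (χ ^ i) (χ ^ j) -
        (Fintype.card F - 2)‖ ≤ 6 + 2 * √(Fintype.card F) := by
  set T := range 3 ×ˢ range 3
  have h00 : (0, 0) ∈ T := by simp [T]
  rw [← sum_product', ← add_sum_erase T _ h00]
  simp only [pow_zero, MulChar.one_apply hc.isUnit, MulChar.one_apply hd.isUnit, one_mul,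
    jacobiSum_one_one, add_sub_cancel_left]
  calc _ ≤ ∑ x ∈ T.erase (0, 0), ‖jacobiSum (χ ^ x.1) (χ ^ x.2)‖ := by
        refine (norm_sum_le _ _).trans (sum_le_sum fun x _ => ?_)
        rw [norm_mul, norm_mul, MulChar.norm_apply_of_isUnit _ hc.isUnit,
          MulChar.norm_apply_of_isUnit _ hd.isUnit, one_mul, one_mul]
    _ ≤ ∑ x ∈ T.erase (0, 0), if x.1 = x.2 then √(Fintype.card F) else 1 := by
        refine sum_le_sum fun x hx => ?_
        obtain ⟨hx0, hxT⟩ := mem_erase.mp hx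
        obtain ⟨hi, hj⟩ := mem_product.mp hxT
        exact norm_jacobiSum_pow_le hχ (mem_range.mp hi) (mem_range.mp hj) hx0
    _ = 6 + 2 * √(Fintype.card F) := by
        rw [sum_erase_eq_sub h00]
        simp [T, sum_product, sum_range_succ]
        ring

end Cubic

section FiniteField

variable {F : Type*} [Field F] [Fintype F]

theorem exists_mulChar_orderOf_three (h3 : 3 ∣ Fintype.card F - 1) :
    ∃ χ : MulChar F ℂ, orderOf χ = 3 :=
  MulChar.exists_mulChar_orderOf F h3 (Complex.isPrimitiveRoot_exp 3 (by norm_num))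

theorem exists_units_not_mem_unitCubes (h3 : 3 ∣ Fintype.card F - 1) :
    ∃ g : Fˣ, (g : F) ∉ unitCubes F := by
  obtain ⟨χ, hχ⟩ := exists_mulChar_orderOf_three h3
  have hχ1 : χ ≠ 1 := by rintro rfl; simp at hχ
  obtain ⟨g, hg⟩ := MulChar.ne_one_iff.mp hχ1
  exact ⟨g, fun h => hg (MulChar.apply_eq_one_of_mem_unitCubes (hχ ▸ pow_orderOf_eq_one χ) h)⟩

theorem exists_mem_unitCubes_add_mul_mem_unitCubes (h3 : 3 ∣ Fintype.card F - 1)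
    (h17 : 17 ≤ Fintype.card F) {a b : F} (ha : a ≠ 0) (hb : b ≠ 0) :
    ∃ u ∈ unitCubes F, a + b * u ∈ unitCubes F := by
  by_contra! hnone
  obtain ⟨χ, hχ⟩ := exists_mulChar_orderOf_three h3
  have hsum : ∑ i ∈ range 3, ∑ j ∈ range 3,
      (χ ^ i) (-a / b) * (χ ^ j) a * jacobiSum (χ ^ i) (χ ^ j) = 0 := by
    calc _ = ∑ i ∈ range 3, ∑ j ∈ range 3, ∑ x, (χ ^ i) x * (χ ^ j) (a + b * x) := by
          simp only [sum_mul_apply_add_mul_eq_jacobiSum _ _ ha hb]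
      _ = ∑ x, (∑ i ∈ range 3, (χ ^ i) x) * ∑ j ∈ range 3, (χ ^ j) (a + b * x) := by
          simp only [sum_mul_sum]
          conv_rhs => rw [sum_comm]
          exact sum_congr rfl fun i _ => sum_comm
      _ = 0 := sum_eq_zero fun x _ => by
          by_cases hx : x ∈ unitCubes F
          · rw [MulChar.sum_pow_apply_eq_zero_of_not_mem_unitCubes hχ (hnone x hx), mul_zero]
          · rw [MulChar.sum_pow_apply_eq_zero_of_not_mem_unitCubes hχ hx, zero_mul]
  have hbound := norm_sum_pow_apply_mul_jacobiSum_sub_le hχ (div_ne_zero (neg_ne_zero.mpr ha) hb) ha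
  rw [hsum, zero_sub, norm_neg] at hbound
  have hq : (17 : ℝ) ≤ Fintype.card F := by exact_mod_cast h17
  rw [show (Fintype.card F : ℂ) - 2 = ((Fintype.card F - 2 : ℝ) : ℂ) by push_cast; ring,
    Complex.norm_of_nonneg (by linarith)] at hbound
  nlinarith [Real.sq_sqrt (Nat.cast_nonneg (Fintype.card F) : (0 : ℝ) ≤ _),
    Real.sqrt_nonneg (Fintype.card F : ℝ)]

end FiniteField

section ZModPrime

variable {p : ℕ} [Fact p.Prime]

-- `p = 13` is too small for the Jacobi sum estimate.
set_option maxRecDepth 100000 in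
theorem zmod13_exists_cube_relation : ∀ r s : ZMod 13, r ≠ 0 → s ≠ 0 →
    (∃ w : ZMod 13, w ≠ 0 ∧ w ^ 3 = -r) ∨ (∃ w : ZMod 13, w ≠ 0 ∧ w ^ 3 * r = -s) ∨
      ∃ w₁ w₂ : ZMod 13, w₁ ≠ 0 ∧ w₂ ≠ 0 ∧ 1 + w₁ ^ 3 * r + w₂ ^ 3 * s = 0 := by
  decide

theorem hasConsecWZS_unitCubes_one_cons_cons (hmod : p % 3 = 1) (h7 : p ≠ 7) {r s : ZMod p} (hr : r ≠ 0)
    (hs : s ≠ 0) : HasConsecWZS (unitCubes (ZMod p)) [1, r, s] := by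
  have hp : p.Prime := Fact.out
  rw [hasConsecWZS_iff]
  rcases le_or_gt 17 p with h17 | h17
  · -- `1 + u * r + v * s = 0` says that `v = -s⁻¹ - (r / s) * u`
    obtain ⟨u, hu, hv⟩ := exists_mem_unitCubes_add_mul_mem_unitCubes (F := ZMod p)
      (by rw [ZMod.card]; omega) (by rwa [ZMod.card]) (neg_ne_zero.mpr (inv_ne_zero hs))
      (neg_ne_zero.mpr (div_ne_zero hr hs))
    refine ⟨_, List.infix_refl _, List.cons_ne_nil _ _,
      isWeightedZeroSum_triple.mpr ⟨1, one_mem_unitCubes, u, hu, _, hv, ?_⟩⟩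
    field_simp
    ring
  obtain rfl : p = 13 := by
    interval_cases p <;> first | rfl | omega | (exfalso; revert hp; norm_num)
  rcases zmod13_exists_cube_relation r s hr hs with ⟨w, hw, h⟩ | ⟨w, hw, h⟩ | ⟨w₁, w₂, hw₁, hw₂, h⟩
  · refine ⟨[1, r], (List.prefix_append _ [s]).isInfix, List.cons_ne_nil _ _,
      isWeightedZeroSum_pair.mpr ⟨_, pow_three_mem_unitCubes hw, 1, one_mem_unitCubes, ?_⟩⟩
    rw [h]
    ring
  · refine ⟨[r, s], (List.suffix_append [1] _).isInfix, List.cons_ne_nil _ _,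
      isWeightedZeroSum_pair.mpr ⟨_, pow_three_mem_unitCubes hw, 1, one_mem_unitCubes, ?_⟩⟩
    rw [h]
    ring
  · exact ⟨_, List.infix_refl _, List.cons_ne_nil _ _, isWeightedZeroSum_triple.mpr
      ⟨1, one_mem_unitCubes, _, pow_three_mem_unitCubes hw₁, _, pow_three_mem_unitCubes hw₂,
        by rw [one_mul]; exact h⟩⟩

theorem hasConsecWZS_unitCubes_triple (hmod : p % 3 = 1) (h7 : p ≠ 7) (x y z : ZMod p) :
    HasConsecWZS (unitCubes (ZMod p)) [x, y, z] := by
  by_cases h0 : (0 : ZMod p) ∈ [x, y, z]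
  · exact hasConsecWZS_of_zero_mem one_mem_unitCubes h0
  simp only [List.mem_cons, List.not_mem_nil, or_false, not_or] at h0
  obtain ⟨hx, hy, hz⟩ := h0
  have h := (hasConsecWZS_unitCubes_one_cons_cons hmod h7 (div_ne_zero (Ne.symm hy) (Ne.symm hx))
    (div_ne_zero (Ne.symm hz) (Ne.symm hx))).map_mul x
  simpa [mul_div_cancel₀ _ (Ne.symm hx)] using h

theorem not_hasConsecWZS_unitCubes_one_pair {g : (ZMod p)ˣ} (hg : (g : ZMod p) ∉ unitCubes (ZMod p)) :
    ¬ HasConsecWZS (unitCubes (ZMod p)) [1, g] := by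
  rw [hasConsecWZS_iff]
  rintro ⟨l, hl, hne, hw⟩
  rcases List.eq_of_isInfix_pair hl hne with rfl | rfl | rfl
  · obtain ⟨a, ha, h⟩ := isWeightedZeroSum_singleton.mp hw
    exact ne_zero_of_mem_unitCubes ha (by rwa [mul_one] at h)
  · obtain ⟨a, ha, h⟩ := isWeightedZeroSum_singleton.mp hw
    exact mul_ne_zero (ne_zero_of_mem_unitCubes ha) g.ne_zero h
  · obtain ⟨a, ha, b, hb, h⟩ := isWeightedZeroSum_pair.mp hw
    apply hg
    convert neg_div_mem_unitCubes ha hb using 1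
    field_simp [ne_zero_of_mem_unitCubes hb]
    linear_combination h

end ZModPrime

/-- For a prime `p ≡ 1 (mod 3)` with `p ≠ 7`, `C_{U(p)³}(p) = 3`. -/
theorem C_of_cubes_prime (p : ℕ) (hp : p.Prime) (hmod : p % 3 = 1) (h7 : p ≠ 7) :
    (∀ L : List (ZMod p), L.length = 3 →
      HasConsecWZS {x : ZMod p | ∃ u : (ZMod p)ˣ, (u : ZMod p) ^ 3 = x} L) ∧
    (∃ L : List (ZMod p), L.length = 2 ∧
      ¬ HasConsecWZS {x : ZMod p | ∃ u : (ZMod p)ˣ, (u : ZMod p) ^ 3 = x} L) := by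
  have := Fact.mk hp
  refine ⟨fun L hL => ?_, ?_⟩
  · obtain ⟨x, y, z, rfl⟩ := List.length_eq_three.mp hL
    exact hasConsecWZS_unitCubes_triple hmod h7 x y z
  · obtain ⟨g, hg⟩ := exists_units_not_mem_unitCubes (F := ZMod p) (by rw [ZMod.card]; omega)
    exact ⟨[1, g], rfl, not_hasConsecWZS_unitCubes_one_pair hg⟩
end

section
/- C_{U(7)^3}(7) = 4, where U(7)^3 = {1, −1} in Z_7; that is: (i) every sequence (x, y, z, w) of length 4 in Z_7 has a nonempty subsequence of consecutive terms which is a {1, −1}-weighted zero-sum sequence; and (ii) the sequence (1, 3, 1) in Z_7 has no nonempty subsequence of consecutive terms which is a {1, −1}-weighted zero-sum sequence. -/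
def signLists : ℕ → List (List (ZMod 7))
  | 0 => [[]]
  | n+1 => (signLists n).flatMap (fun a => [1 :: a, (-1) :: a])

lemma mem_signLists {k : ℕ} {a : List (ZMod 7)} :
    a ∈ signLists k ↔ a.length = k ∧ ∀ w ∈ a, w = 1 ∨ w = -1 := by
  induction k generalizing a with
  | zero =>
    constructor
    · intro h
      simp [signLists] at h
      simp [h]
    · intro ⟨h, _⟩
      simp [signLists, List.length_eq_zero_iff.mp h]
  | succ n ih =>
    simp only [signLists, List.mem_flatMap, List.mem_cons, List.mem_singleton,
      List.not_mem_nil, or_false]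
    constructor
    · rintro ⟨b, hb, rfl | rfl⟩ <;>
      · obtain ⟨hl, hw⟩ := ih.1 hb
        constructor
        · simp [hl]
        · intro w hw'
          simp only [List.mem_cons] at hw'
          rcases hw' with rfl | hw'
          · simp
          · exact hw w hw'
    · rintro ⟨hl, hw⟩
      match a, hl with
      | x :: b, hl =>
        refine ⟨b, ih.2 ⟨by simpa using hl, fun w hw' => hw w (by simp [hw'])⟩, ?_⟩
        rcases hw x (by simp) with rfl | rfl
        · left; rfl
        · right; rfl

def goodBlock (l : List (ZMod 7)) : Prop :=
  ∃ a ∈ signLists l.length, (List.zipWith (· * ·) a l).sum = 0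

instance : DecidablePred goodBlock := fun _ => List.decidableBEx _ _

lemma isWZS_iff (L : List (ZMod 7)) :
    IsWeightedZeroSum ({1, -1} : Set (ZMod 7)) L ↔ goodBlock L := by
  unfold IsWeightedZeroSum goodBlock
  constructor
  · rintro ⟨a, h1, h2, h3⟩
    exact ⟨a, mem_signLists.2 ⟨h1, fun w hw => by simpa using h2 w hw⟩, h3⟩
  · rintro ⟨a, ha, h3⟩
    obtain ⟨h1, h2⟩ := mem_signLists.1 ha
    exact ⟨a, h1, fun w hw => by simpa using h2 w hw, h3⟩

lemma consec_iff (L : List (ZMod 7)) :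
    HasConsecWZS ({1, -1} : Set (ZMod 7)) L ↔
      ∃ i ∈ List.range L.length, ∃ len ∈ List.range (L.length + 1),
        0 < len ∧ i + len ≤ L.length ∧ goodBlock ((L.drop i).take len) := by
  constructor
  · rintro ⟨l₁, l₂, l₃, rfl, hne, hz⟩
    have hlen2 : 0 < l₂.length := List.length_pos_iff.2 hne
    have hL : l₁ ++ l₂ ++ l₃ = l₁ ++ (l₂ ++ l₃) := by simp [List.append_assoc]
    have hblock : (((l₁ ++ l₂ ++ l₃).drop l₁.length).take l₂.length) = l₂ := by
      rw [hL, List.drop_left, List.take_left]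
    refine ⟨l₁.length, ?_, l₂.length, ?_, hlen2, ?_, ?_⟩
    · simp only [List.mem_range, List.length_append]; omega
    · simp only [List.mem_range, List.length_append]; omega
    · simp only [List.length_append]; omega
    · rw [hblock]; exact (isWZS_iff l₂).1 hz
  · rintro ⟨i, hi, len, hlen, hpos, hile, hg⟩
    simp only [List.mem_range] at hi hlen
    refine ⟨L.take i, (L.drop i).take len, L.drop (i + len), ?_, ?_, (isWZS_iff _).2 hg⟩
    · conv_lhs => rw [← List.take_append_drop i L]
      rw [List.append_assoc]
      congr 1
      conv_lhs => rw [← List.take_append_drop len (L.drop i)]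
      congr 1
      rw [List.drop_drop]
    · apply List.ne_nil_of_length_pos
      simp only [List.length_take, List.length_drop]
      omega

set_option maxHeartbeats 0 in
/-- `C_{U(7)³}(7) = 4`, where `U(7)³ = {1, -1}` in `Z_7`: every sequence of
length `4` has a nonempty consecutive `{1,-1}`-weighted zero-sum subsequence, and the
sequence `(1, 3, 1)` has none. -/
theorem C_cubes_seven :
    (∀ L : List (ZMod 7), L.length = 4 → HasConsecWZS ({1, -1} : Set (ZMod 7)) L) ∧
    ¬ HasConsecWZS ({1, -1} : Set (ZMod 7)) [1, 3, 1] := by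
  constructor
  · intro L hL
    obtain ⟨x, y, z, w, rfl⟩ : ∃ x y z w, L = [x, y, z, w] := by
      rcases L with _ | ⟨x, _ | ⟨y, _ | ⟨z, _ | ⟨w, _ | ⟨v, t⟩⟩⟩⟩⟩
      · simp at hL
      · simp at hL
      · simp at hL
      · simp at hL
      · exact ⟨x, y, z, w, rfl⟩
      · simp only [List.length_cons] at hL; omega
    rw [consec_iff]
    revert x y z w
    decide
  · rw [consec_iff]
    decide
end

section
/- For any natural number n ≥ 1, C_{U(n)}(n) ≥ 2^{Ω(n)}; that is, there exists a sequence of length 2^{Ω(n)} − 1 in Z_n having no nonempty subsequence of consecutive terms which is a U(n)-weighted zero-sum sequence. -/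
/-!
For `q₁, …, q_k` the prime factors of `n` (with multiplicity), take the ruler sequence
`S(q₁ … q_k)` with `S(q :: qs) = q • S(qs), 1, q • S(qs)` (entrywise multiplication by `q`),
of length `2^k - 1`.
A block inside one copy of `q • S(qs)` has weighted sum `q` times a weighted sum of a block of
`S(qs)`, which by induction is not divisible by `∏ qs`. A block through the middle `1` has
weighted sum congruent modulo `q` to the weight `w` of that `1`, and `w` is prime to `q`.
Hence no weighted block sum with weights prime to `n` is divisible by `q₁ ⋯ q_k = n`.
-/

section WeightedSum

variable {R : Type*} [CommSemiring R]

def weightedSum (a l : List R) : R :=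
  (List.zipWith (· * ·) a l).sum

@[simp]
theorem weightedSum_cons_cons (w x : R) (a l : List R) :
    weightedSum (w :: a) (x :: l) = w * x + weightedSum a l := by
  simp [weightedSum]

theorem weightedSum_map_mul_left (q : R) (a l : List R) :
    weightedSum a (l.map (q * ·)) = q * weightedSum a l := by
  simp only [weightedSum, List.zipWith_map_right, mul_left_comm _ q, ← List.map_zipWith]
  exact (map_list_sum (AddMonoidHom.mulLeft q) _).symm

theorem dvd_weightedSum {q : R} {l : List R} (h : ∀ x ∈ l, q ∣ x) (a : List R) :
    q ∣ weightedSum a l := by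
  induction l generalizing a with
  | nil => cases a <;> simp [weightedSum]
  | cons x l ih =>
    cases a with
    | nil => simp [weightedSum]
    | cons w a =>
      rw [weightedSum_cons_cons]
      exact dvd_add (Dvd.dvd.mul_left (h x (by simp)) w) (ih (fun y hy => h y (by simp [hy])) a)

theorem map_weightedSum {S : Type*} [CommSemiring S] (f : R →+* S) (a l : List R) :
    f (weightedSum a l) = weightedSum (a.map f) (l.map f) := by
  simp [weightedSum, map_list_sum, List.map_zipWith, List.zipWith_map_left,
    List.zipWith_map_right]

theorem exists_weightedSum_append_cons {a s t : List R} {y : R}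
    (h : a.length = (s ++ y :: t).length) :
    ∃ a₁ w a₂, w ∈ a ∧
      weightedSum a (s ++ y :: t) = weightedSum a₁ s + w * y + weightedSum a₂ t := by
  induction s generalizing a with
  | nil =>
    obtain _ | ⟨w, a₂⟩ := a
    · simp at h
    · exact ⟨[], w, a₂, by simp, by simp [weightedSum]⟩
  | cons x s ih =>
    obtain _ | ⟨b, a⟩ := a
    · simp at h
    · obtain ⟨a₁, w, a₂, hw, hsum⟩ := ih (by simpa using h)
      exact ⟨b :: a₁, w, a₂, List.mem_cons_of_mem b hw, by simp [hsum, add_assoc]⟩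

end WeightedSum

def ruler : List ℕ → List ℕ
  | [] => []
  | q :: qs => (ruler qs).map (q * ·) ++ 1 :: (ruler qs).map (q * ·)

theorem length_ruler (qs : List ℕ) : (ruler qs).length = 2 ^ qs.length - 1 := by
  induction qs with
  | nil => rfl
  | cons q qs ih =>
    have := Nat.one_le_two_pow (n := qs.length)
    simp only [ruler, List.length_append, List.length_cons, List.length_map, ih, pow_succ]
    omega

theorem not_dvd_weightedSum_append_one_cons {q : ℕ} (hq : 1 < q) {a s t : List ℕ}
    (hs : ∀ x ∈ s, q ∣ x) (ht : ∀ x ∈ t, q ∣ x) (hlen : a.length = (s ++ 1 :: t).length)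
    (ha : ∀ w ∈ a, w.Coprime q) : ¬ q ∣ weightedSum a (s ++ 1 :: t) := by
  intro hdvd
  obtain ⟨a₁, w, a₂, hw, hsum⟩ := exists_weightedSum_append_cons hlen
  rw [hsum, mul_one] at hdvd
  have hqw : q ∣ w :=
    (Nat.dvd_add_right (dvd_weightedSum hs a₁)).mp
      ((Nat.dvd_add_left (dvd_weightedSum ht a₂)).mp hdvd)
  exact hq.ne' ((ha w hw).symm.eq_one_of_dvd hqw)

theorem not_prod_dvd_weightedSum_of_infix_ruler {qs : List ℕ} (hqs : ∀ q ∈ qs, 1 < q)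
    {l a : List ℕ} (hl : l <:+: ruler qs) (hne : l ≠ []) (hlen : a.length = l.length)
    (ha : ∀ w ∈ a, w.Coprime qs.prod) : ¬ qs.prod ∣ weightedSum a l := by
  induction qs generalizing l with
  | nil => exact absurd (List.eq_nil_of_infix_nil hl) hne
  | cons q qs ih =>
    have hq : 1 < q := hqs q (by simp)
    have ha' (w) (hw : w ∈ a) : w.Coprime q ∧ w.Coprime qs.prod :=
      Nat.coprime_mul_iff_right.mp (ha w hw)
    set A := (ruler qs).map (q * ·)
    have inside (l) (hl : l <:+: A) (hne : l ≠ []) (hlen : a.length = l.length) :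
        ¬ q * qs.prod ∣ weightedSum a l := by
      obtain ⟨l', hl', rfl⟩ := List.infix_map_iff.mp hl
      rw [weightedSum_map_mul_left, Nat.mul_dvd_mul_iff_left (by omega)]
      exact ih (fun p hp => hqs p (by simp [hp])) hl' (by simpa using hne) (by simpa using hlen)
        fun w hw => (ha' w hw).2
    have hA : ∀ x ∈ A, q ∣ x := by simp [A]
    have through_one (s t) (hs : s <:+ A) (ht : t <+: A)
        (hlen : a.length = (s ++ 1 :: t).length) :
        ¬ q * qs.prod ∣ weightedSum a (s ++ 1 :: t) := fun hdvd =>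
      not_dvd_weightedSum_append_one_cons hq (fun x hx => hA x (hs.subset hx))
        (fun x hx => hA x (ht.subset hx)) hlen (fun w hw => (ha' w hw).1)
        ((dvd_mul_right q _).trans hdvd)
    rw [List.prod_cons]
    rcases List.infix_append_iff.mp hl with h | h | ⟨s, t, rfl, hs, ht⟩
    · exact inside l h hne hlen
    · rcases List.infix_cons_iff.mp h with h | h
      · rcases List.prefix_cons_iff.mp h with rfl | ⟨t, rfl, ht⟩
        · exact absurd rfl hne
        · exact through_one [] t List.nil_suffix ht hlen
      · exact inside l h hne hlen
    · rcases List.prefix_cons_iff.mp ht with rfl | ⟨t', rfl, ht'⟩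
      · rw [List.append_nil] at hne hlen ⊢
        exact inside s hs.isInfix hne hlen
      · exact through_one s t' hs ht' hlen

/-- For `n ≥ 1`, `C_{U(n)}(n) ≥ 2^{Ω(n)}`: there exists a sequence of
length `2^{Ω(n)} - 1` in `Z_n` with no nonempty consecutive `U(n)`-weighted zero-sum
subsequence. Here `Ω(n)` is the number of prime factors of `n` with multiplicity. -/
theorem C_units_lower_bound (n : ℕ) (hn : 1 ≤ n) :
    ∃ L : List (ZMod n), L.length = 2 ^ n.primeFactorsList.length - 1 ∧
      ¬ HasConsecWZS {x : ZMod n | IsUnit x} L := by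
  have : NeZero n := ⟨by omega⟩
  refine ⟨(ruler n.primeFactorsList).map (↑), by rw [List.length_map, length_ruler], ?_⟩
  rintro ⟨l₁, l, l₃, hL, hne, a, hlen, ha, hsum⟩
  obtain ⟨l', hl', rfl⟩ := List.infix_map_iff.mp (hL ▸ List.infix_append _ _ _)
  have hcast : ((weightedSum (a.map ZMod.val) l' : ℕ) : ZMod n) = 0 := by
    rw [← Nat.coe_castRingHom, map_weightedSum, List.map_map]
    simpa [Function.comp_def, weightedSum] using hsum
  have hcoprime : ∀ w ∈ a.map ZMod.val, w.Coprime n.primeFactorsList.prod := by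
    simp only [List.mem_map, Nat.prod_primeFactorsList (NeZero.ne n)]
    rintro _ ⟨_, hu, rfl⟩
    obtain ⟨u, rfl⟩ := ha _ hu
    exact ZMod.val_coe_unit_coprime u
  refine not_prod_dvd_weightedSum_of_infix_ruler
    (fun q hq => (Nat.prime_of_mem_primeFactorsList hq).one_lt) hl' (by simpa using hne)
    (by simpa using hlen) hcoprime ?_
  rwa [Nat.prod_primeFactorsList (NeZero.ne n), ← ZMod.natCast_eq_zero_iff]
end

section
/- Let n = 2^k for some k ≥ 1. Then C_{U(n)}(n) = C_{\{1,−1\}}(n) = n; that is: (i) every sequence of length n in Z_n has a nonempty subsequence of consecutive terms which is a {1, −1}-weighted zero-sum sequence; and (ii) there exists a sequence of length n − 1 in Z_n having no nonempty subsequence of consecutive terms which is a U(n)-weighted zero-sum sequence. -/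
theorem List.exists_infix_ne_nil_sum_eq_zero {M : Type*} [AddLeftCancelMonoid M] [Fintype M]
    {L : List M} (hL : Fintype.card M ≤ L.length) :
    ∃ l, l <:+: L ∧ l ≠ [] ∧ l.sum = 0 := by
  have hblock : ∀ i j : ℕ, i < j → j ≤ L.length → (L.take i).sum = (L.take j).sum →
      ∃ l, l <:+: L ∧ l ≠ [] ∧ l.sum = 0 := by
    intro i j hij hj hsum
    have htake : L.take j = L.take i ++ (L.drop i).take (j - i) := by
      rw [← List.take_add, Nat.add_sub_cancel' hij.le]
    refine ⟨(L.drop i).take (j - i),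
      ((List.take_prefix _ _).isInfix).trans (List.drop_suffix _ _).isInfix, ?_, ?_⟩
    · rw [← List.length_pos_iff, List.length_take, List.length_drop]
      omega
    · rw [htake, List.sum_append] at hsum
      exact left_eq_add.mp hsum
  have hcard : Fintype.card M < Fintype.card (Fin (L.length + 1)) := by
    rw [Fintype.card_fin]
    omega
  obtain ⟨i, j, hij, hsum⟩ :=
    Fintype.exists_ne_map_eq_of_card_lt (fun i : Fin (L.length + 1) => (L.take i).sum) hcard
  rcases Fin.lt_or_lt_of_ne hij with h | h
  · exact hblock i j h (Nat.lt_succ_iff.mp j.isLt) hsum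
  · exact hblock j i h (Nat.lt_succ_iff.mp i.isLt) hsum.symm

theorem isWeightedZeroSum_of_sum_eq_zero {n : ℕ} {A : Set (ZMod n)} (hA : 1 ∈ A)
    {l : List (ZMod n)} (hl : l.sum = 0) : IsWeightedZeroSum A l := by
  refine ⟨List.replicate l.length 1, List.length_replicate, fun w hw => ?_, ?_⟩
  · rwa [List.eq_of_mem_replicate hw]
  · have hone : List.zipWith (· * ·) (List.replicate l.length 1) l = l := by
      apply List.ext_getElem <;> simp
    rwa [hone]

theorem hasConsecWZS_of_le_length {n : ℕ} [NeZero n] {A : Set (ZMod n)} (hA : 1 ∈ A)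
    {L : List (ZMod n)} (hL : n ≤ L.length) : HasConsecWZS A L := by
  obtain ⟨l, ⟨l₁, l₃, hL⟩, hne, hsum⟩ :=
    List.exists_infix_ne_nil_sum_eq_zero (L := L) (by rwa [ZMod.card])
  exact ⟨l₁, l, l₃, hL.symm, hne, isWeightedZeroSum_of_sum_eq_zero hA hsum⟩

theorem IsWeightedZeroSum.exists_fin_sum_eq_zero {n : ℕ} {A : Set (ZMod n)} {l : List (ZMod n)}
    (h : IsWeightedZeroSum A l) :
    ∃ a : Fin l.length → ZMod n, (∀ i, a i ∈ A) ∧ ∑ i, a i * l[i] = 0 := by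
  obtain ⟨a, hlen, hA, hsum⟩ := h
  refine ⟨fun i => a[i], fun i => hA _ (List.getElem_mem _), ?_⟩
  rw [← hsum, ← List.sum_ofFn]
  congr 1
  apply List.ext_getElem <;> simp [hlen]

theorem List.getElem_of_map_range'_eq_append {α : Type*} {f : ℕ → α} {a N : ℕ}
    {l₁ l₂ l₃ : List α} (h : (List.range' a N).map f = l₁ ++ l₂ ++ l₃) (i : ℕ)
    (hi : i < l₂.length) : l₂[i] = f (a + l₁.length + i) := by
  have hlen := congrArg List.length h
  simp only [List.length_map, List.length_range', List.length_append] at hlen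
  have hL : (l₁ ++ l₂ ++ l₃)[l₁.length + i]'(by simp; omega) = l₂[i] := by
    rw [List.getElem_append_left (by simp; omega), List.getElem_append_right (by omega)]
    simp
  rw [← hL]
  simp only [← h, List.getElem_map, List.getElem_range']
  ring_nf

theorem exists_mem_Ioc_padicValNat_two_lt {t₁ t₂ : ℕ} (ht₁ : 0 < t₁) (h : t₁ < t₂)
    (hv : padicValNat 2 t₁ = padicValNat 2 t₂) :
    ∃ u ∈ Finset.Ioc t₁ t₂, padicValNat 2 t₁ < padicValNat 2 u := by
  have hodd_part : ∀ t, t ≠ 0 → ∃ c, Odd c ∧ t = 2 ^ padicValNat 2 t * c := by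
    intro t ht
    obtain ⟨c, hc⟩ : 2 ^ padicValNat 2 t ∣ t := pow_padicValNat_dvd
    refine ⟨c, Nat.odd_iff.mpr (Nat.two_dvd_ne_zero.mp fun h2 => ?_), hc⟩
    refine pow_succ_padicValNat_not_dvd (p := 2) ht ?_
    rw [pow_succ]
    conv_rhs => rw [hc]
    exact mul_dvd_mul_left _ h2
  obtain ⟨c₁, hodd₁, hc₁⟩ := hodd_part t₁ ht₁.ne'
  obtain ⟨c₂, hodd₂, hc₂⟩ := hodd_part t₂ (by omega)
  rw [← hv] at hc₂
  set M := padicValNat 2 t₁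
  have hc : c₁ < c₂ := by
    rw [hc₁, hc₂] at h
    exact Nat.lt_of_mul_lt_mul_left h
  have heven : Even (c₁ + 1) := hodd₁.add_one
  have hle : c₁ + 1 ≤ c₂ := by
    rcases hodd₂ with ⟨d₂, rfl⟩
    obtain ⟨d₁, hd₁⟩ := heven
    omega
  refine ⟨2 ^ M * (c₁ + 1), ?_, ?_⟩
  · rw [Finset.mem_Ioc, hc₁, hc₂]
    exact ⟨Nat.mul_lt_mul_of_pos_left (by omega) (by positivity), Nat.mul_le_mul_left _ hle⟩
  · rw [Nat.lt_iff_add_one_le, ← padicValNat_dvd_iff_le (by positivity), pow_succ]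
    exact mul_dvd_mul_left _ heven.two_dvd

theorem exists_mem_Ico_padicValNat_two_lt {a b : ℕ} (ha : 0 < a) (hab : a < b) :
    ∃ t₀ ∈ Finset.Ico a b, ∀ t ∈ Finset.Ico a b, t ≠ t₀ →
      padicValNat 2 t < padicValNat 2 t₀ := by
  obtain ⟨t₀, ht₀, hmax⟩ :=
    (Finset.Ico a b).exists_max_image (padicValNat 2) (Finset.nonempty_Ico.mpr hab)
  have hbelow : ∀ t₁ ∈ Finset.Ico a b, ∀ t₂ ∈ Finset.Ico a b, t₁ < t₂ →
      padicValNat 2 t₁ = padicValNat 2 t₂ → padicValNat 2 t₁ < padicValNat 2 t₀ := by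
    intro t₁ h₁ t₂ h₂ h hv
    rw [Finset.mem_Ico] at h₁ h₂
    obtain ⟨u, hu, hlt⟩ := exists_mem_Ioc_padicValNat_two_lt (by omega) h hv
    rw [Finset.mem_Ioc] at hu
    exact hlt.trans_le (hmax u (Finset.mem_Ico.mpr ⟨by omega, by omega⟩))
  refine ⟨t₀, ht₀, fun t ht hne => (hmax t ht).lt_of_ne fun hv => ?_⟩
  rcases hne.lt_or_gt with h | h
  · exact (hbelow t ht t₀ ht₀ h hv).ne hv
  · exact (hbelow t₀ ht₀ t ht h hv.symm).ne rfl

theorem Nat.not_dvd_sum_of_not_dvd_of_dvd {ι : Type*} {s : Finset ι} {f : ι → ℕ} {d : ℕ}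
    {i₀ : ι} (hi₀ : i₀ ∈ s) (hnd : ¬ d ∣ f i₀) (hd : ∀ i ∈ s, i ≠ i₀ → d ∣ f i) :
    ¬ d ∣ ∑ i ∈ s, f i := by
  classical
  rw [← Finset.add_sum_erase s f hi₀]
  refine fun h => hnd ((Nat.dvd_add_left (Finset.dvd_sum fun i hi => ?_)).mp h)
  exact hd i (Finset.mem_of_mem_erase hi) (Finset.ne_of_mem_erase hi)

theorem padicValNat_lt_of_lt_pow {p t k : ℕ} [hp : Fact p.Prime] (ht : t ≠ 0) (h : t < p ^ k) :
    padicValNat p t < k :=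
  (Nat.pow_lt_pow_iff_right hp.out.one_lt).mp
    ((Nat.le_of_dvd (Nat.pos_of_ne_zero ht) pow_padicValNat_dvd).trans_lt h)

def rulerWeight (k t : ℕ) : ℕ := 2 ^ (k - 1 - padicValNat 2 t)

theorem not_two_pow_dvd_sum_odd_mul_rulerWeight {k s m : ℕ} (hs : 0 < s) (hm : 0 < m)
    (hsm : s + m ≤ 2 ^ k) {b : Fin m → ℕ} (hb : ∀ i, Odd (b i)) :
    ¬ 2 ^ k ∣ ∑ i, b i * rulerWeight k (s + i) := by
  obtain ⟨t₀, ht₀, hmax⟩ := exists_mem_Ico_padicValNat_two_lt hs (by omega : s < s + m)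
  rw [Finset.mem_Ico] at ht₀
  have hv₀ : padicValNat 2 t₀ < k := padicValNat_lt_of_lt_pow (by omega) (by omega)
  let i₀ : Fin m := ⟨t₀ - s, by omega⟩
  have hi₀ : s + (i₀ : ℕ) = t₀ := by simp only [i₀]; omega
  have hd : 2 ^ (k - padicValNat 2 t₀) ∣ 2 ^ k := pow_dvd_pow 2 (Nat.sub_le _ _)
  refine fun h => Nat.not_dvd_sum_of_not_dvd_of_dvd (Finset.mem_univ i₀) ?_ ?_ (hd.trans h)
  · rw [rulerWeight, hi₀, show k - padicValNat 2 t₀ = k - 1 - padicValNat 2 t₀ + 1 by omega,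
      pow_succ', Nat.mul_dvd_mul_iff_right (by positivity)]
    exact (hb i₀).not_two_dvd_nat
  · intro i _ hi
    have hlt := hmax (s + i) (Finset.mem_Ico.mpr ⟨by omega, by omega⟩)
      (fun h => hi (Fin.ext (by simp only [i₀]; omega)))
    exact dvd_mul_of_dvd_right (pow_dvd_pow 2 (by omega)) _

theorem sum_mul_rulerWeight_ne_zero {k s m : ℕ} (hs : 0 < s) (hm : 0 < m) (hsm : s + m ≤ 2 ^ k)
    {a : Fin m → ZMod (2 ^ k)} (ha : ∀ i, IsUnit (a i)) :
    ∑ i, a i * (rulerWeight k (s + i) : ZMod (2 ^ k)) ≠ 0 := by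
  have hk : 0 < k := Nat.pos_of_ne_zero <| by
    rintro rfl
    simp only [pow_zero] at hsm
    omega
  have hodd : ∀ i, Odd (a i).val := fun i => by
    have hu := ha i
    rw [← ZMod.natCast_zmod_val (a i), ZMod.isUnit_natCast_iff_not_dvd_pow Nat.prime_two hk] at hu
    exact Nat.odd_iff.mpr (Nat.two_dvd_ne_zero.mp hu)
  intro h
  refine not_two_pow_dvd_sum_odd_mul_rulerWeight hs hm hsm hodd ?_
  rw [← ZMod.natCast_eq_zero_iff]
  push_cast
  simpa only [ZMod.natCast_zmod_val] using h

theorem C_units_two_power_general (k : ℕ) :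
    (∀ L : List (ZMod (2 ^ k)), L.length = 2 ^ k →
      HasConsecWZS ({1, -1} : Set (ZMod (2 ^ k))) L) ∧
    (∃ L : List (ZMod (2 ^ k)), L.length = 2 ^ k - 1 ∧
      ¬ HasConsecWZS {x : ZMod (2 ^ k) | IsUnit x} L) := by
  refine ⟨fun L hL => hasConsecWZS_of_le_length (by simp) hL.ge, ?_⟩
  refine ⟨(List.range' 1 (2 ^ k - 1)).map fun t => (rulerWeight k t : ZMod (2 ^ k)), by simp, ?_⟩
  rintro ⟨l₁, l₂, l₃, hL, hne, hw⟩
  obtain ⟨a, ha, hsum⟩ := hw.exists_fin_sum_eq_zero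
  have hlen := congrArg List.length hL
  simp only [List.length_map, List.length_range', List.length_append] at hlen
  have hm := List.length_pos_iff.mpr hne
  refine sum_mul_rulerWeight_ne_zero (s := 1 + l₁.length) (by omega) hm (by omega) ha ?_
  simpa only [Fin.getElem_fin, List.getElem_of_map_range'_eq_append hL] using hsum

/-- For `n = 2^k`, `C_{U(n)}(n) = C_{{1,-1}}(n) = n`: every sequence of
length `n` in `Z_n` has a nonempty consecutive `{1,-1}`-weighted zero-sum subsequence,
and some sequence of length `n - 1` has no nonempty consecutive `U(n)`-weighted
zero-sum subsequence. -/
theorem C_units_two_power (k : ℕ) (hk : 1 ≤ k) :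
    (∀ L : List (ZMod (2 ^ k)), L.length = 2 ^ k →
      HasConsecWZS ({1, -1} : Set (ZMod (2 ^ k))) L) ∧
    (∃ L : List (ZMod (2 ^ k)), L.length = 2 ^ k - 1 ∧
      ¬ HasConsecWZS {x : ZMod (2 ^ k) | IsUnit x} L) :=
  C_units_two_power_general k
end

section
/- Let p be a prime divisor of n, let n' = n/p, and let S = (x_1, …, x_k) be a sequence in Z_n such that each x_i is the image of p·y_i under the map Z_{n'} → Z_n sending y + n'Z to py + nZ, for some sequence S' = (y_1, …, y_k) in Z_{n'} (i.e., every term of S is divisible by p and S' is obtained by dividing the terms of S by p). If S' is a U(n')-weighted zero-sum sequence in Z_{n'}, then S is a U(n)-weighted zero-sum sequence in Z_n; and if S' is a U(n')^2-weighted zero-sum sequence in Z_{n'}, then S is a U(n)^2-weighted zero-sum sequence in Z_n. -/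
theorem List.exists_map_eq_of_forall_mem_image {α β : Type*} {f : α → β} {s : Set α} :
    ∀ {l : List β}, (∀ x ∈ l, x ∈ f '' s) → ∃ l' : List α, (∀ y ∈ l', y ∈ s) ∧ l'.map f = l
  | [], _ => ⟨[], by simp⟩
  | x :: l, h => by
    obtain ⟨y, hy, rfl⟩ := h x List.mem_cons_self
    obtain ⟨l', hl's, rfl⟩ :=
      exists_map_eq_of_forall_mem_image fun z hz => h z (List.mem_cons_of_mem _ hz)
    exact ⟨y :: l', by simpa using ⟨hy, hl's⟩, rfl⟩

namespace ZMod

variable (p : ℕ) {m n : ℕ}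

theorem natCast_mul_val_natCast (h : p * m = n) (a : ℕ) :
    (p : ZMod n) * ((a : ZMod m).val : ZMod n) = p * a := by
  have hdiv : p * a = p * (a % m) + n * (a / m) := by
    rw [← h, mul_assoc, ← mul_add, Nat.mod_add_div]
  rw [val_natCast, ← Nat.cast_mul, ← Nat.cast_mul, hdiv]
  simp

def mulByHom [NeZero m] (h : p * m = n) : ZMod m →+ ZMod n where
  toFun y := p * y.val
  map_zero' := by simp
  map_add' y z := by
    have hyz : y + z = ((y.val + z.val : ℕ) : ZMod m) := by simp
    rw [hyz, natCast_mul_val_natCast p h]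
    push_cast
    ring

theorem mul_mulByHom [NeZero m] [NeZero n] (h : p * m = n) (b : ZMod n) (y : ZMod m) :
    b * mulByHom p h y = mulByHom p h (castHom (Dvd.intro_left p h) (ZMod m) b * y) := by
  have hby : castHom (Dvd.intro_left p h) (ZMod m) b * y = ((b.val * y.val : ℕ) : ZMod m) := by
    simp [natCast_val]
  simp only [mulByHom, AddMonoidHom.coe_mk, ZeroHom.coe_mk]
  rw [hby, natCast_mul_val_natCast p h]
  conv_lhs => rw [← natCast_zmod_val b]
  push_cast
  ring

theorem setOf_isUnit_subset_image_castHom [NeZero n] (h : m ∣ n) :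
    {x : ZMod m | IsUnit x} ⊆ castHom h (ZMod m) '' {x | IsUnit x} := by
  rintro _ ⟨u, rfl⟩
  obtain ⟨v, rfl⟩ := unitsMap_surjective h u
  exact ⟨v, v.isUnit, rfl⟩

theorem setOf_sq_units_subset_image_castHom [NeZero n] (h : m ∣ n) :
    {x : ZMod m | ∃ u : (ZMod m)ˣ, (u : ZMod m) ^ 2 = x} ⊆
      castHom h (ZMod m) '' {x | ∃ u : (ZMod n)ˣ, (u : ZMod n) ^ 2 = x} := by
  rintro _ ⟨u, rfl⟩
  obtain ⟨v, rfl⟩ := unitsMap_surjective h u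
  exact ⟨v ^ 2, ⟨v, rfl⟩, map_pow _ _ _⟩

end ZMod

theorem IsWeightedZeroSum.map {m n : ℕ} {A' : Set (ZMod m)} {A : Set (ZMod n)}
    (g : ZMod m →+ ZMod n) (φ : ZMod n → ZMod m) (hg : ∀ b y, b * g y = g (φ b * y))
    (hA : A' ⊆ φ '' A) {S' : List (ZMod m)} (hS' : IsWeightedZeroSum A' S') :
    IsWeightedZeroSum A (S'.map g) := by
  obtain ⟨a', hlen, ha'A', hsum⟩ := hS'
  obtain ⟨a, haA, rfl⟩ := List.exists_map_eq_of_forall_mem_image fun x hx => hA (ha'A' x hx)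
  refine ⟨a, by simpa using hlen, haA, ?_⟩
  calc (List.zipWith (· * ·) a (S'.map g)).sum
      = ((List.zipWith (· * ·) (a.map φ) S').map g).sum := by
        simp only [List.zipWith_map_left, List.zipWith_map_right, List.map_zipWith, hg]
    _ = 0 := by rw [← map_list_sum, hsum, map_zero]

theorem wzs_of_divided_sequence_general (n p : ℕ) (hn : 0 < n) (hpn : p ∣ n)
    (S : List (ZMod n)) (S' : List (ZMod (n / p)))
    (hS : S = S'.map fun y => (p : ZMod n) * (y.val : ZMod n)) :
    (IsWeightedZeroSum {x : ZMod (n / p) | IsUnit x} S' →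
      IsWeightedZeroSum {x : ZMod n | IsUnit x} S) ∧
    (IsWeightedZeroSum {x : ZMod (n / p) | ∃ u : (ZMod (n / p))ˣ, (u : ZMod (n / p)) ^ 2 = x} S' →
      IsWeightedZeroSum {x : ZMod n | ∃ u : (ZMod n)ˣ, (u : ZMod n) ^ 2 = x} S) := by
  have : NeZero n := ⟨hn.ne'⟩
  have : NeZero (n / p) :=
    ⟨(Nat.div_pos (Nat.le_of_dvd hn hpn) (Nat.pos_of_dvd_of_pos hpn hn)).ne'⟩
  have hpm : p * (n / p) = n := Nat.mul_div_cancel' hpn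
  have hS : S = S'.map (ZMod.mulByHom p hpm) := hS
  subst hS
  exact ⟨.map _ _ (ZMod.mul_mulByHom p hpm) (ZMod.setOf_isUnit_subset_image_castHom _),
    .map _ _ (ZMod.mul_mulByHom p hpm) (ZMod.setOf_sq_units_subset_image_castHom _)⟩

/-- Let `p` be a prime divisor of `n` and `n' = n / p`. If every term of
`S` is obtained from the corresponding term of `S'` (a sequence over `Z_{n'}`) via the
map `y + n'Z ↦ py + nZ`, then: if `S'` is a `U(n')`-weighted zero-sum sequence so is `S`
a `U(n)`-weighted one, and if `S'` is a `U(n')²`-weighted zero-sum sequence so is `S` a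
`U(n)²`-weighted one. -/
theorem wzs_of_divided_sequence (n p : ℕ) (hn : 0 < n) (hp : p.Prime) (hpn : p ∣ n)
    (S : List (ZMod n)) (S' : List (ZMod (n / p)))
    (hS : S = S'.map fun y => (p : ZMod n) * (y.val : ZMod n)) :
    (IsWeightedZeroSum {x : ZMod (n / p) | IsUnit x} S' →
      IsWeightedZeroSum {x : ZMod n | IsUnit x} S) ∧
    (IsWeightedZeroSum {x : ZMod (n / p) | ∃ u : (ZMod (n / p))ˣ, (u : ZMod (n / p)) ^ 2 = x} S' →
      IsWeightedZeroSum {x : ZMod n | ∃ u : (ZMod n)ˣ, (u : ZMod n) ^ 2 = x} S) :=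
  wzs_of_divided_sequence_general n p hn hpn S S' hS
end

section
/- Let n be an odd natural number. Then every sequence of length 2^{Ω(n)} in Z_n has a nonempty subsequence of consecutive terms which is a U(n)-weighted zero-sum sequence; that is, C_{U(n)}(n) ≤ 2^{Ω(n)}. -/
open scoped Pointwise

section UnitWeightedSums

variable {R S : Type*} [CommRing R] [CommRing S]

/-- The pointwise sum of the orbits `Rˣ • xᵢ`, i.e. the set of all `u₁x₁ + ⋯ + u_kx_k` with
units `uᵢ`. -/
def unitWeightedSums (L : List R) : Set R :=
  (L.map (MulAction.orbit Rˣ)).sum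

@[simp]
lemma unitWeightedSums_nil : unitWeightedSums ([] : List R) = 0 := rfl

@[simp]
lemma unitWeightedSums_cons (x : R) (L : List R) :
    unitWeightedSums (x :: L) = MulAction.orbit Rˣ x + unitWeightedSums L :=
  List.sum_cons

lemma List.Perm.unitWeightedSums_eq {L L' : List R} (h : L.Perm L') :
    unitWeightedSums L = unitWeightedSums L' :=
  (h.map _).sum_eq

lemma sum_mem_unitWeightedSums (L : List R) : L.sum ∈ unitWeightedSums L := by
  induction L with
  | nil => rfl
  | cons x L ih => exact Set.add_mem_add (MulAction.mem_orbit_self x) ih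

lemma zero_mem_unitWeightedSums_of_subsingleton [Subsingleton R] (L : List R) :
    0 ∈ unitWeightedSums L :=
  Subsingleton.elim L.sum 0 ▸ sum_mem_unitWeightedSums L

lemma exists_unit_weights_of_mem_unitWeightedSums {L : List R} {y : R}
    (h : y ∈ unitWeightedSums L) :
    ∃ a : List R, a.length = L.length ∧ (∀ w ∈ a, IsUnit w) ∧
      (List.zipWith (· * ·) a L).sum = y := by
  induction L generalizing y with
  | nil => exact ⟨[], rfl, by simp, (Set.mem_zero.mp h).symm⟩
  | cons x L ih =>
    obtain ⟨_, ⟨u, rfl⟩, s, hs, rfl⟩ := h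
    obtain ⟨a, hlen, hunit, rfl⟩ := ih hs
    refine ⟨u :: a, by simp [hlen], ?_, rfl⟩
    simpa using And.intro u.isUnit hunit

lemma image_unitWeightedSums {F : Type*} [FunLike F R S] [AddMonoidHomClass F R S] {g : F}
    (hg : ∀ x, g '' MulAction.orbit Rˣ x = MulAction.orbit Sˣ (g x)) (L : List R) :
    g '' unitWeightedSums L = unitWeightedSums (L.map g) := by
  induction L with
  | nil => simp [Set.singleton_zero]
  | cons x L ih => simp only [unitWeightedSums_cons, List.map_cons, Set.image_add, hg, ih]

lemma image_orbit_units_of_surjective {F : Type*} [FunLike F R S] [RingHomClass F R S] (f : F)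
    (hf : Function.Surjective (Units.map (f : R →* S))) (x : R) :
    f '' MulAction.orbit Rˣ x = MulAction.orbit Sˣ (f x) := by
  ext y
  constructor
  · rintro ⟨_, ⟨u, rfl⟩, rfl⟩
    exact ⟨Units.map (f : R →* S) u, by simp [Units.smul_def]⟩
  · rintro ⟨v, rfl⟩
    obtain ⟨u, rfl⟩ := hf v
    exact ⟨u • x, ⟨u, rfl⟩, by simp [Units.smul_def]⟩

lemma image_mulLeft_orbit_units (c x : R) :
    AddMonoidHom.mulLeft c '' MulAction.orbit Rˣ x = MulAction.orbit Rˣ (c * x) := by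
  ext y
  constructor
  · rintro ⟨_, ⟨u, rfl⟩, rfl⟩
    exact ⟨u, by simp [Units.smul_def, mul_left_comm]⟩
  · rintro ⟨u, rfl⟩
    exact ⟨u • x, ⟨u, rfl⟩, by simp [Units.smul_def, mul_left_comm]⟩

lemma prod_subset_unitWeightedSums (L : List (R × S)) :
    unitWeightedSums (L.map Prod.fst) ×ˢ unitWeightedSums (L.map Prod.snd) ⊆
      unitWeightedSums L := by
  induction L with
  | nil => simp
  | cons x L ih =>
    simp only [List.map_cons, unitWeightedSums_cons, ← Set.prod_add_prod_comm]
    refine Set.add_subset_add ?_ ih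
    rintro ⟨_, _⟩ ⟨⟨u, rfl⟩, ⟨v, rfl⟩⟩
    exact ⟨MulEquiv.prodUnits.symm (u, v), rfl⟩

lemma orbit_units_of_isUnit {u : R} (hu : IsUnit u) :
    MulAction.orbit Rˣ u = {w | IsUnit w} := by
  ext w
  refine ⟨fun ⟨v, hv⟩ => hv ▸ v.isUnit.mul hu, fun hw => ⟨hw.unit * hu.unit⁻¹, ?_⟩⟩
  simp [Units.smul_def, mul_assoc]

lemma unitWeightedSums_eq_univ (hR : ∀ x : R, ∃ u v : Rˣ, (u : R) + v = x) {L M : List R}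
    {u v : R} (hu : IsUnit u) (hv : IsUnit v) (hL : L.Perm (u :: v :: M)) :
    unitWeightedSums L = Set.univ := by
  refine Set.eq_univ_of_forall fun x => ?_
  obtain ⟨a, b, hab⟩ := hR (x - M.sum)
  rw [hL.unitWeightedSums_eq, unitWeightedSums_cons, unitWeightedSums_cons,
    orbit_units_of_isUnit hu, orbit_units_of_isUnit hv, ← add_assoc]
  exact ⟨a + b, Set.add_mem_add a.isUnit b.isUnit, M.sum, sum_mem_unitWeightedSums M,
    by simp [hab]⟩

end UnitWeightedSums

lemma List.exists_perm_cons_cons_of_two_le_countP {α : Type*} {P : α → Bool} {L : List α}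
    (h : 2 ≤ L.countP P) : ∃ u v M, P u ∧ P v ∧ L.Perm (u :: v :: M) := by
  rw [List.countP_eq_length_filter] at h
  match hf : L.filter P, h with
  | u :: v :: t, _ =>
    have hP : ∀ w ∈ L.filter P, P w := fun w hw => (List.mem_filter.mp hw).2
    rw [hf] at hP
    refine ⟨u, v, t ++ L.filter (fun x => !P x), hP u (by simp), hP v (by simp), ?_⟩
    simpa [hf] using (List.filter_append_perm P L).symm

theorem List.exists_infix_countP_ne_one {α ι : Type*} [DecidableEq ι] (P : ι → α → Bool)
    (s : Finset ι) {L : List α} (hL : 2 ^ s.card ≤ L.length) :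
    ∃ l, l <:+: L ∧ l ≠ [] ∧ ∀ i ∈ s, l.countP (P i) ≠ 1 := by
  induction s using Finset.strongInduction generalizing L with
  | H s ih =>
    by_cases hall : ∀ i ∈ s, L.countP (P i) ≠ 1
    · exact ⟨L, List.infix_refl L, List.ne_nil_of_length_pos ((Nat.two_pow_pos _).trans_le hL),
        hall⟩
    push Not at hall
    obtain ⟨i, hi, hcount⟩ := hall
    obtain ⟨z, hz, hPz⟩ := List.countP_pos_iff.mp (by omega : 0 < L.countP (P i))
    obtain ⟨X, Y, rfl⟩ := List.append_of_mem hz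
    have hXY : X.countP (P i) = 0 ∧ Y.countP (P i) = 0 := by
      simp only [List.countP_append, List.countP_cons, hPz, if_true] at hcount
      omega
    have hcard : 2 ^ s.card = 2 * 2 ^ (s.erase i).card := by
      rw [← pow_succ', Finset.card_erase_add_one hi]
    obtain ⟨W, hW, hW0, hWlen⟩ : ∃ W, W <:+: X ++ z :: Y ∧ W.countP (P i) = 0 ∧
        2 ^ (s.erase i).card ≤ W.length := by
      rcases le_or_gt (2 ^ (s.erase i).card) X.length with hX | hX
      · exact ⟨X, List.infix_append [] X (z :: Y), hXY.1, hX⟩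
      · refine ⟨Y, List.infix_append (X ++ [z]) Y [] |>.trans (by simp), hXY.2, ?_⟩
        simp only [List.length_append, List.length_cons] at hL
        omega
    obtain ⟨l, hl, hne, hcounts⟩ := ih _ (Finset.erase_ssubset hi) hWlen
    refine ⟨l, hl.trans hW, hne, fun j hj => ?_⟩
    by_cases hji : j = i
    · subst hji
      have := hl.sublist.countP_le (p := P j)
      omega
    · exact hcounts j (Finset.mem_erase.mpr ⟨hji, hj⟩)

lemma Nat.card_divisors_filter_isPrimePow (n : ℕ) :
    {d ∈ n.divisors | IsPrimePow d}.card = n.primeFactorsList.length := by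
  induction n using Nat.recOnPrimeCoprime with
  | zero => simp
  | prime_pow p k hp =>
    rw [hp.primeFactorsList_pow k, List.length_replicate, Nat.divisors_prime_pow hp]
    have hfilter : {t ∈ Finset.range (k + 1) | IsPrimePow (p ^ t)} =
        (Finset.range (k + 1)).erase 0 := by
      ext t
      rcases eq_or_ne t 0 with rfl | ht
      · simp [not_isPrimePow_one]
      · simp [ht, isPrimePow_pow_iff ht, hp.isPrimePow]
    rw [Finset.filter_map, Finset.card_map]
    simp [hfilter]
  | coprime a b ha hb hab iha ihb =>
    rw [Nat.mul_divisors_filter_prime_pow hab, Finset.filter_union,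
      Finset.card_union_of_disjoint (Nat.disjoint_divisors_filter_isPrimePow hab), iha, ihb,
      (Nat.perm_primeFactorsList_mul (by omega) (by omega)).length_eq, List.length_append]

namespace ZMod

lemma val_castHom {m n : ℕ} [NeZero n] (h : m ∣ n) (x : ZMod n) :
    (castHom h (ZMod m) x).val = x.val % m := by
  rw [castHom_apply, cast_eq_val, val_natCast]

lemma countP_not_dvd_val_map_castHom {m n d : ℕ} [NeZero n] (hmn : m ∣ n) (hdm : d ∣ m)
    (L : List (ZMod n)) :
    (L.map (castHom hmn (ZMod m))).countP (fun y => ¬ d ∣ y.val) =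
      L.countP (fun x => ¬ d ∣ x.val) := by
  rw [List.countP_map]
  refine List.countP_congr fun x _ => ?_
  simp only [Function.comp_apply, val_castHom, Nat.dvd_mod_iff hdm]

lemma isUnit_prime_pow_iff {p e : ℕ} (hp : p.Prime) (he : e ≠ 0) (x : ZMod (p ^ e)) :
    IsUnit x ↔ ¬ p ∣ x.val := by
  have : NeZero (p ^ e) := ⟨pow_ne_zero _ hp.ne_zero⟩
  conv_lhs => rw [← natCast_zmod_val x]
  rw [isUnit_iff_coprime, Nat.coprime_pow_right_iff (Nat.pos_of_ne_zero he),
    Nat.coprime_comm, hp.coprime_iff_not_dvd]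

lemma exists_units_add_eq {p e : ℕ} (hp : p.Prime) (hodd : Odd p) (he : e ≠ 0)
    (x : ZMod (p ^ e)) : ∃ u v : (ZMod (p ^ e))ˣ, (u : ZMod (p ^ e)) + v = x := by
  have : Fact p.Prime := ⟨hp⟩
  have : NeZero (p ^ e) := ⟨pow_ne_zero _ hp.ne_zero⟩
  let φ := castHom (dvd_pow_self p he) (ZMod p)
  have isUnit_of_ne_zero : ∀ y, φ y ≠ 0 → IsUnit y := fun y hy => by
    rwa [isUnit_prime_pow_iff hp he, ← natCast_eq_zero_iff, ← cast_eq_val]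
  by_cases h : φ (x - 1) = 0
  · have h2 : φ 2 ≠ 0 := by
      rw [map_ofNat, ← Nat.cast_ofNat, Ne, natCast_eq_zero_iff]
      exact fun hdvd => Nat.not_even_iff_odd.mpr hodd
        ((Nat.prime_dvd_prime_iff_eq hp Nat.prime_two).mp hdvd ▸ even_two)
    have hx2 : φ (x - 2) ≠ 0 := by
      rw [show x - 2 = x - 1 - 1 by ring, map_sub, h, map_one, zero_sub, neg_ne_zero]
      exact one_ne_zero
    exact ⟨(isUnit_of_ne_zero 2 h2).unit, (isUnit_of_ne_zero _ hx2).unit, by simp⟩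
  · exact ⟨1, (isUnit_of_ne_zero _ h).unit, by simp⟩

lemma zero_mem_unitWeightedSums_of_dvd_val {p e : ℕ} (hp : p.Prime)
    (L : List (ZMod (p ^ (e + 1)))) (hL : ∀ x ∈ L, p ∣ x.val)
    (hD : 0 ∈ unitWeightedSums (L.map fun x => ((x.val / p : ℕ) : ZMod (p ^ e)))) :
    0 ∈ unitWeightedSums L := by
  have : NeZero (p ^ (e + 1)) := ⟨pow_ne_zero _ hp.ne_zero⟩
  let π := castHom (pow_dvd_pow p e.le_succ) (ZMod (p ^ e))
  let D := L.map fun x => ((x.val / p : ℕ) : ZMod (p ^ (e + 1)))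
  have hπD : D.map π = L.map fun x => ((x.val / p : ℕ) : ZMod (p ^ e)) := by simp [D]
  have hpD : D.map (AddMonoidHom.mulLeft (p : ZMod (p ^ (e + 1)))) = L := by
    refine (List.map_map ..).trans (List.map_congr_left fun x hx => ?_) |>.trans L.map_id
    simp [← Nat.cast_mul, Nat.mul_div_cancel' (hL x hx)]
  obtain ⟨s, hs, hπs⟩ : 0 ∈ π '' unitWeightedSums D := by
    rwa [image_unitWeightedSums (image_orbit_units_of_surjective π (unitsMap_surjective _)),
      hπD]
  have hps : (p : ZMod (p ^ (e + 1))) * s ∈ unitWeightedSums L := by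
    rw [← hpD, ← image_unitWeightedSums (image_mulLeft_orbit_units _)]
    exact ⟨s, hs, rfl⟩
  have hdvd : p ^ e ∣ s.val := by
    rwa [castHom_apply, cast_eq_val, natCast_eq_zero_iff] at hπs
  have hps0 : (p : ZMod (p ^ (e + 1))) * s = 0 := by
    rw [← natCast_zmod_val s, ← Nat.cast_mul, natCast_eq_zero_iff]
    simpa [pow_succ'] using mul_dvd_mul_left p hdvd
  rwa [hps0] at hps

theorem zero_mem_unitWeightedSums_of_prime_pow {p : ℕ} (hp : p.Prime) (hodd : Odd p)
    (e : ℕ) (L : List (ZMod (p ^ e)))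
    (hL : ∀ d ∈ (p ^ e).divisors, IsPrimePow d → L.countP (fun x => ¬ d ∣ x.val) ≠ 1) :
    0 ∈ unitWeightedSums L := by
  induction e with
  | zero =>
    have := subsingleton_iff.mpr (pow_zero p)
    exact zero_mem_unitWeightedSums_of_subsingleton L
  | succ e ih =>
    have hunits := hL p (Nat.mem_divisors.mpr
      ⟨dvd_pow_self p e.succ_ne_zero, pow_ne_zero _ hp.ne_zero⟩) hp.isPrimePow
    rcases Nat.lt_or_ge (L.countP (fun x => ¬ p ∣ x.val)) 2 with hc | hc
    · have hc0 : L.countP (fun x => ¬ p ∣ x.val) = 0 := by omega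
      have hLp : ∀ x ∈ L, p ∣ x.val := fun x hx => by
        simpa using List.countP_eq_zero.mp hc0 x hx
      refine zero_mem_unitWeightedSums_of_dvd_val hp L hLp (ih _ fun d hd hpd => ?_)
      have hdvd : d ∣ p ^ e := Nat.dvd_of_mem_divisors hd
      have hpd_mem : p * d ∈ (p ^ (e + 1)).divisors :=
        Nat.mem_divisors.mpr ⟨pow_succ' p e ▸ mul_dvd_mul_left p hdvd, pow_ne_zero _ hp.ne_zero⟩
      have hpd_pow : IsPrimePow (p * d) :=
        (hp.isPrimePow.pow e.succ_ne_zero).dvd (Nat.dvd_of_mem_divisors hpd_mem)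
          fun h => hp.ne_one (Nat.eq_one_of_mul_eq_one_right h)
      rw [List.countP_map]
      convert hL (p * d) hpd_mem hpd_pow using 1
      refine List.countP_congr fun x hx => ?_
      simp only [Function.comp_apply, val_natCast, Nat.dvd_mod_iff hdvd,
        Nat.dvd_div_iff_mul_dvd (hLp x hx)]
    · obtain ⟨u, v, M, hu, hv, hL⟩ := List.exists_perm_cons_cons_of_two_le_countP hc
      rw [unitWeightedSums_eq_univ (exists_units_add_eq hp hodd e.succ_ne_zero)
        ((isUnit_prime_pow_iff hp e.succ_ne_zero u).mpr (by simpa using hu))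
        ((isUnit_prime_pow_iff hp e.succ_ne_zero v).mpr (by simpa using hv)) hL]
      trivial

theorem zero_mem_unitWeightedSums_of_coprime {a b : ℕ} (hab : a.Coprime b)
    (L : List (ZMod (a * b)))
    (ha : 0 ∈ unitWeightedSums (L.map (castHom (dvd_mul_right a b) (ZMod a))))
    (hb : 0 ∈ unitWeightedSums (L.map (castHom (dvd_mul_left b a) (ZMod b)))) :
    0 ∈ unitWeightedSums L := by
  let e := chineseRemainder hab
  have hfst : (RingHom.fst _ _).comp (e : ZMod (a * b) →+* ZMod a × ZMod b) =
      castHom (dvd_mul_right a b) (ZMod a) := RingHom.ext_zmod _ _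
  have hsnd : (RingHom.snd _ _).comp (e : ZMod (a * b) →+* ZMod a × ZMod b) =
      castHom (dvd_mul_left b a) (ZMod b) := RingHom.ext_zmod _ _
  have h0 : (0 : ZMod a × ZMod b) ∈ unitWeightedSums (L.map e) :=
    prod_subset_unitWeightedSums _
      ⟨by simpa [List.map_map, ← hfst] using ha, by simpa [List.map_map, ← hsnd] using hb⟩
  obtain ⟨z, hz, hz0⟩ := (image_unitWeightedSums
    (image_orbit_units_of_surjective e (Units.mapEquiv e.toMulEquiv).surjective) L).ge h0
  rwa [(map_eq_zero_iff e e.injective).mp hz0] at hz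

theorem zero_mem_unitWeightedSums_of_odd {n : ℕ} (hn : Odd n) (L : List (ZMod n))
    (hL : ∀ d ∈ n.divisors, IsPrimePow d → L.countP (fun x => ¬ d ∣ x.val) ≠ 1) :
    0 ∈ unitWeightedSums L := by
  induction n using Nat.recOnPrimeCoprime with
  | zero => exact absurd hn Nat.not_odd_zero
  | prime_pow p k hp =>
    rcases eq_or_ne k 0 with rfl | hk
    · have := subsingleton_iff.mpr (pow_zero p)
      exact zero_mem_unitWeightedSums_of_subsingleton L
    · exact zero_mem_unitWeightedSums_of_prime_pow hp ((Nat.odd_pow_iff hk).mp hn) k L hL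
  | coprime a b _ _ hab iha ihb =>
    have : NeZero (a * b) := ⟨hn.pos.ne'⟩
    have restrict {m : ℕ} (hm : m ∣ a * b) : ∀ d ∈ m.divisors, IsPrimePow d →
        (L.map (castHom hm (ZMod m))).countP (fun y => ¬ d ∣ y.val) ≠ 1 := fun d hd hpd => by
      rw [countP_not_dvd_val_map_castHom hm (Nat.dvd_of_mem_divisors hd)]
      exact hL d (Nat.mem_divisors.mpr ⟨(Nat.dvd_of_mem_divisors hd).trans hm, this.ne⟩) hpd
    exact zero_mem_unitWeightedSums_of_coprime hab L
      (iha (Nat.Odd.of_mul_left hn) _ (restrict _)) (ihb (Nat.Odd.of_mul_right hn) _ (restrict _))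

end ZMod

/-- For odd `n`, every sequence of length `2^{Ω(n)}` in `Z_n` has a
nonempty consecutive `U(n)`-weighted zero-sum subsequence, i.e.
`C_{U(n)}(n) ≤ 2^{Ω(n)}`. -/
theorem C_units_upper_bound_odd (n : ℕ) (hodd : Odd n) :
    ∀ L : List (ZMod n), L.length = 2 ^ n.primeFactorsList.length →
      HasConsecWZS {x : ZMod n | IsUnit x} L := by
  intro L hL
  obtain ⟨l, ⟨l₁, l₃, rfl⟩, hne, hcount⟩ := List.exists_infix_countP_ne_one
    (fun d (x : ZMod n) => ¬ d ∣ x.val) {d ∈ n.divisors | IsPrimePow d}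
    (by rw [Nat.card_divisors_filter_isPrimePow, hL])
  refine ⟨l₁, l, l₃, rfl, hne, exists_unit_weights_of_mem_unitWeightedSums ?_⟩
  exact ZMod.zero_mem_unitWeightedSums_of_odd hodd l fun d hd hpd =>
    hcount d (Finset.mem_filter.mpr ⟨hd, hpd⟩)
end

section
/- Let n ≥ 2 be such that every prime divisor of n is at least 7. Then every sequence of length 3^{Ω(n)} in Z_n has a nonempty subsequence of consecutive terms which is a U(n)^2-weighted zero-sum sequence; that is, C_{U(n)^2}(n) ≤ 3^{Ω(n)} (and hence, combined with the lower bound, C_{U(n)^2}(n) = 3^{Ω(n)}). -/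
/-!
Lift the terms to integers. If every prime `p ∣ n` has at least three terms prime to it, then
every residue mod `n` is a `U(n)²`-weighted sum of the whole sequence. Mod `p`, each set
`yᵢ · U(p)²` has at least `(p - 1)/2` elements, so by Cauchy–Davenport `y₁ · U(p)² + y₂ · U(p)²`
misses at most two residues, while `t - y₃ · U(p)²` has at least three elements once `p ≥ 7`;
hence they meet. Newton's method lifts this to `p^k`, and the Chinese remainder theorem glues the
prime powers. Otherwise some `p ∣ n` divides all but at most two terms, so some block of at least
`3^(Ω(n) - 1)` consecutive terms is divisible by `p`. Dividing the block by `p`, it contains a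
zero-sum block mod `n / p` by induction, and multiplying back by `p` gives a zero-sum block mod `n`.
-/

open ArithmeticFunction.Omega

variable {R S : Type*}

section WeightedSums

variable [Semiring R] [Semiring S]

def weightedSums (A : Set R) : List R → Set R
  | [] => {0}
  | x :: L => {t | ∃ a ∈ A, ∃ s ∈ weightedSums A L, a * x + s = t}

variable {A : Set R}

theorem exists_zipWith_sum_eq_of_mem_weightedSums :
    ∀ {L : List R} {t : R}, t ∈ weightedSums A L →
      ∃ a : List R, a.length = L.length ∧ (∀ w ∈ a, w ∈ A) ∧ (List.zipWith (· * ·) a L).sum = t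
  | [], _, rfl => ⟨[], rfl, by simp, rfl⟩
  | _ :: _, _, ⟨a, ha, _, hs, rfl⟩ => by
    obtain ⟨as, hlen, hA, rfl⟩ := exists_zipWith_sum_eq_of_mem_weightedSums hs
    exact ⟨a :: as, by simp [hlen], by simpa [ha] using hA, rfl⟩

theorem sum_mem_weightedSums (hA : 1 ∈ A) : ∀ L : List R, L.sum ∈ weightedSums A L
  | [] => rfl
  | x :: L => ⟨1, hA, L.sum, sum_mem_weightedSums hA L, by simp⟩

theorem List.Perm.weightedSums_eq {L L' : List R} (h : L.Perm L') :
    weightedSums A L = weightedSums A L' := by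
  induction h with
  | nil => rfl
  | cons x _ ih => simp only [weightedSums, ih]
  | swap x y L =>
    ext t
    constructor <;>
    · rintro ⟨a, ha, _, ⟨b, hb, s, hs, rfl⟩, rfl⟩
      exact ⟨b, hb, _, ⟨a, ha, s, hs, rfl⟩, add_left_comm _ _ _⟩
  | trans _ _ ih₁ ih₂ => exact ih₁.trans ih₂

theorem map_mem_weightedSums (f : R →+* S) {B : Set S} (hAB : Set.MapsTo f A B) :
    ∀ {L : List R} {t : R}, t ∈ weightedSums A L → f t ∈ weightedSums B (L.map f)
  | [], _, rfl => map_zero f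
  | _ :: _, _, ⟨a, ha, _, hs, rfl⟩ =>
    ⟨f a, hAB ha, _, map_mem_weightedSums f hAB hs, by rw [map_add, map_mul]⟩

theorem mk_mem_weightedSums_prod {B : Set S} {C : Set (R × S)} (hC : A ×ˢ B ⊆ C) :
    ∀ {L : List (R × S)} {t₁ : R} {t₂ : S}, t₁ ∈ weightedSums A (L.map Prod.fst) →
      t₂ ∈ weightedSums B (L.map Prod.snd) → (t₁, t₂) ∈ weightedSums C L
  | [], _, _, rfl, rfl => rfl
  | _ :: _, _, _, ⟨a, ha, _, hs, rfl⟩, ⟨b, hb, _, hs', rfl⟩ =>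
    ⟨(a, b), hC ⟨ha, hb⟩, _, mk_mem_weightedSums_prod hC hs hs', rfl⟩

end WeightedSums

section UnitSquares

variable [Monoid R] [Monoid S]

def unitSquares (R : Type*) [Monoid R] : Set R := {x | ∃ u : Rˣ, (u : R) ^ 2 = x}

theorem one_mem_unitSquares : (1 : R) ∈ unitSquares R := ⟨1, by simp⟩

theorem mapsTo_unitSquares (f : R →* S) : Set.MapsTo f (unitSquares R) (unitSquares S) := by
  rintro _ ⟨u, rfl⟩
  exact ⟨Units.map f u, by simp⟩

theorem unitSquares_prod_subset : unitSquares R ×ˢ unitSquares S ⊆ unitSquares (R × S) := by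
  rintro ⟨_, _⟩ ⟨⟨u, rfl⟩, ⟨v, rfl⟩⟩
  exact ⟨MulEquiv.prodUnits.symm (u, v), by simp [MulEquiv.prodUnits]⟩

end UnitSquares

theorem List.exists_infix_forall_and_length_le {α : Type*} {P : α → Prop} [DecidablePred P]
    (k : ℕ) {L : List α} (h : L.countP (fun x ↦ ¬ P x) ≤ k) :
    ∃ l, l <:+: L ∧ (∀ x ∈ l, P x) ∧ L.length ≤ (k + 1) * l.length + k := by
  induction k generalizing L with
  | zero => exact ⟨L, infix_refl L, by simpa using h, by simp⟩
  | succ k ih =>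
    cases hb : L.find? (fun x ↦ ¬ P x) with
    | none => exact ⟨L, infix_refl L, by simpa using hb, by nlinarith⟩
    | some b =>
      obtain ⟨hPb, A, B, rfl, hA⟩ := find?_eq_some_iff_append.mp hb
      replace hA : ∀ x ∈ A, P x := by simpa using hA
      have hA0 : A.countP (fun x ↦ ¬ P x) = 0 := countP_eq_zero.mpr (by simpa using hA)
      obtain ⟨l, hl, hlP, hlen⟩ := ih (L := B) (by
        rw [countP_append, countP_cons, hA0, if_pos hPb] at h; omega)
      rcases le_total A.length l.length with hAl | hlA
      · exact ⟨l, hl.trans ((suffix_cons b B).trans (suffix_append A _)).isInfix, hlP,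
          by simp; nlinarith⟩
      · exact ⟨A, (prefix_append A _).isInfix, hA, by simp; nlinarith⟩

open Finset Pointwise in
theorem card_units_le_two_mul_card_image_sq_mul {F : Type*} [Field F] [Fintype F]
    [DecidableEq F] {y : F} (hy : y ≠ 0) :
    Fintype.card Fˣ ≤ 2 * #(univ.image fun u : Fˣ ↦ (u : F) ^ 2 * y) := by
  refine card_le_mul_card_image _ 2 fun b hb ↦ ?_
  obtain ⟨v, -, rfl⟩ := mem_image.mp hb
  calc #{u ∈ univ | ((u : Fˣ) : F) ^ 2 * y = (v : F) ^ 2 * y}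
      ≤ #({v, -v} : Finset Fˣ) := by
        refine card_le_card fun u hu ↦ ?_
        simp only [mem_filter, mem_univ, true_and, mul_left_inj' hy,
          sq_eq_sq_iff_eq_or_eq_neg] at hu
        simpa only [mem_insert, mem_singleton, Units.ext_iff, Units.val_neg]
    _ ≤ 2 := card_le_two

open Finset Pointwise in
theorem ZMod.exists_units_sq_mul_add_sq_mul_add_sq_mul {p : ℕ} [Fact p.Prime] (hp : 7 ≤ p)
    (y₁ y₂ y₃ : (ZMod p)ˣ) (t : ZMod p) :
    ∃ u₁ u₂ u₃ : (ZMod p)ˣ, (u₁ : ZMod p) ^ 2 * y₁ + u₂ ^ 2 * y₂ + u₃ ^ 2 * y₃ = t := by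
  set S : (ZMod p)ˣ → Finset (ZMod p) := fun y ↦
    univ.image fun u : (ZMod p)ˣ ↦ (u : ZMod p) ^ 2 * y
  have hS (y : (ZMod p)ˣ) : p - 1 ≤ 2 * #(S y) :=
    ZMod.card_units p ▸ card_units_le_two_mul_card_image_sq_mul y.ne_zero
  have hne (y : (ZMod p)ˣ) : (S y).Nonempty := univ_nonempty.image _
  have h₁₂ := ZMod.cauchy_davenport Fact.out (hne y₁) (hne y₂)
  have h₃ : #((S y₃).image (t - ·)) = #(S y₃) := card_image_of_injective _ sub_right_injective
  obtain ⟨z, hz⟩ := inter_nonempty_of_card_lt_card_add_card (subset_univ (S y₁ + S y₂))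
    (subset_univ ((S y₃).image (t - ·))) (by
      have := hS y₁; have := hS y₂; have := hS y₃
      rw [card_univ, ZMod.card, h₃]; omega)
  obtain ⟨hz₁₂, hz₃⟩ := mem_inter.mp hz
  obtain ⟨a, ha, b, hb, rfl⟩ := mem_add.mp hz₁₂
  obtain ⟨c, hc, h⟩ := mem_image.mp hz₃
  obtain ⟨u₁, -, rfl⟩ := mem_image.mp ha
  obtain ⟨u₂, -, rfl⟩ := mem_image.mp hb
  obtain ⟨u₃, -, rfl⟩ := mem_image.mp hc
  exact ⟨u₁, u₂, u₃, by rw [← h]; ring⟩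

section CommRing

variable [CommRing R]

open Polynomial in
theorem exists_sq_eq_of_isNilpotent_sq_sub {a s : R} (hs : IsUnit (2 * s))
    (h : IsNilpotent (s ^ 2 - a)) : ∃ r, r ^ 2 = a := by
  obtain ⟨r, -, hr⟩ := (existsUnique_nilpotent_sub_and_aeval_eq_zero (P := X ^ 2 - C a)
    (x := s) (by simpa using h) (by simpa [one_add_one_eq_two] using hs)).exists
  exact ⟨r, by simpa [sub_eq_zero] using hr⟩

variable {p : ℕ} [Fact p.Prime] (π : R →+* ZMod p)

theorem isUnit_of_map_ne_zero (hπ : RingHom.ker π ≤ nilradical R) {x : R} (hx : π x ≠ 0) :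
    IsUnit x := by
  obtain ⟨y, hy⟩ := ZMod.ringHom_surjective π (π x)⁻¹
  have : IsNilpotent (x * y - 1) := mem_nilradical.mp (hπ (by simp [hy, hx]))
  exact isUnit_of_mul_isUnit_left (y := y) (by simpa using this.isUnit_add_one)

theorem exists_units_sq_mul_add_sq_mul_add_sq_mul_of_ker_le_nilradical
    (hπ : RingHom.ker π ≤ nilradical R) (hp : 7 ≤ p)
    (y₁ y₂ y₃ : Rˣ) (t : R) :
    ∃ u₁ u₂ u₃ : Rˣ, (u₁ : R) ^ 2 * y₁ + u₂ ^ 2 * y₂ + u₃ ^ 2 * y₃ = t := by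
  have lift (v : (ZMod p)ˣ) : ∃ u : Rˣ, π u = v := by
    obtain ⟨x, hx⟩ := ZMod.ringHom_surjective π v
    exact ⟨(isUnit_of_map_ne_zero π hπ (hx ▸ v.ne_zero)).unit, hx⟩
  obtain ⟨v₁, v₂, v₃, hv⟩ := ZMod.exists_units_sq_mul_add_sq_mul_add_sq_mul hp
    (Units.map π y₁) (Units.map π y₂) (Units.map π y₃) (π t)
  obtain ⟨s, hs⟩ := lift v₁
  obtain ⟨u₂, hu₂⟩ := lift v₂
  obtain ⟨u₃, hu₃⟩ := lift v₃
  set w := (t - u₂ ^ 2 * y₂ - u₃ ^ 2 * y₃) * ↑y₁⁻¹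
  have hπw : π w = v₁ ^ 2 := by
    have hy₁ : π y₁ ≠ 0 := (Units.map (π : R →* ZMod p) y₁).ne_zero
    simp only [Units.coe_map, MonoidHom.coe_coe] at hv
    simp only [w, map_mul, map_sub, map_pow, map_units_inv, hu₂, hu₃, ← hv]
    field_simp
    ring
  have h2 : (2 : ZMod p) ≠ 0 := by
    intro h
    have := Nat.le_of_dvd two_pos ((ZMod.natCast_eq_zero_iff 2 p).mp (by exact_mod_cast h))
    omega
  obtain ⟨r, hr⟩ := exists_sq_eq_of_isNilpotent_sq_sub (a := w) (s := s)
    (isUnit_of_map_ne_zero π hπ (by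
      simp only [map_mul, map_ofNat, hs]; exact mul_ne_zero h2 v₁.ne_zero))
    (mem_nilradical.mp (hπ (by simp [hs, hπw])))
  have hru : IsUnit r := (isUnit_pow_iff two_ne_zero).mp
    (hr ▸ isUnit_of_map_ne_zero π hπ (by simp [hπw]))
  exact ⟨hru.unit, u₂, u₃, by simp [hr, w]; ring⟩

theorem weightedSums_unitSquares_eq_univ_of_ker_le_nilradical
    (hπ : RingHom.ker π ≤ nilradical R) (hp : 7 ≤ p) {L : List R}
    (hL : 3 ≤ L.countP (fun x ↦ π x ≠ 0)) : weightedSums (unitSquares R) L = Set.univ := by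
  refine Set.eq_univ_of_forall fun t ↦ ?_
  rw [List.countP_eq_length_filter] at hL
  have hunit : ∀ y ∈ L.filter (fun x ↦ π x ≠ 0), IsUnit y := fun y hy ↦
    isUnit_of_map_ne_zero π hπ (by simpa using (List.mem_filter.mp hy).2)
  obtain ⟨y₁, y₂, y₃, U, hU⟩ :
      ∃ y₁ y₂ y₃ U, L.filter (fun x ↦ π x ≠ 0) = y₁ :: y₂ :: y₃ :: U := by
    match L.filter (fun x ↦ π x ≠ 0), hL with
    | y₁ :: y₂ :: y₃ :: U, _ => exact ⟨y₁, y₂, y₃, U, rfl⟩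
  rw [hU] at hunit
  obtain ⟨u₁, u₂, u₃, hu⟩ := exists_units_sq_mul_add_sq_mul_add_sq_mul_of_ker_le_nilradical π hπ
    hp (hunit y₁ (by simp)).unit (hunit y₂ (by simp)).unit (hunit y₃ (by simp)).unit
    (t - (U ++ L.filter (fun x ↦ !decide (π x ≠ 0))).sum)
  simp only [IsUnit.unit_spec] at hu
  rw [← (List.filter_append_perm (fun x ↦ decide (π x ≠ 0)) L).weightedSums_eq, hU]
  exact ⟨_, ⟨u₁, rfl⟩, _, ⟨_, ⟨u₂, rfl⟩, _, ⟨_, ⟨u₃, rfl⟩, _,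
    sum_mem_weightedSums one_mem_unitSquares _, rfl⟩, rfl⟩, by linear_combination hu⟩

end CommRing

namespace ZMod

theorem ker_castHom_le_nilradical {p c : ℕ} (hc : c ≠ 0) :
    RingHom.ker (castHom (dvd_pow_self p hc) (ZMod p)) ≤ nilradical (ZMod (p ^ c)) := by
  intro x hx
  obtain ⟨y, rfl⟩ := intCast_surjective x
  obtain ⟨k, rfl⟩ := (intCast_zmod_eq_zero_iff_dvd y p).mp (by simpa using hx)
  exact mem_nilradical.mpr ⟨c, by
    rw [Int.cast_mul, mul_pow, Int.cast_natCast, ← Nat.cast_pow, natCast_self, zero_mul]⟩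

theorem weightedSums_intCast_eq_univ_of_prime_pow {p c : ℕ} [Fact p.Prime] (hp : 7 ≤ p)
    (hc : c ≠ 0) {X : List ℤ} (hX : 3 ≤ X.countP (fun x ↦ ¬ (p : ℤ) ∣ x)) :
    weightedSums (unitSquares (ZMod (p ^ c))) (X.map Int.cast) = Set.univ := by
  refine weightedSums_unitSquares_eq_univ_of_ker_le_nilradical _
    (ker_castHom_le_nilradical hc) hp ?_
  simp only [List.countP_map, Function.comp_def, map_intCast]
  simpa [intCast_zmod_eq_zero_iff_dvd] using hX

theorem weightedSums_intCast_mul_eq_univ {a b : ℕ} (hab : a.Coprime b) {X : List ℤ}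
    (ha : weightedSums (unitSquares (ZMod a)) (X.map Int.cast) = Set.univ)
    (hb : weightedSums (unitSquares (ZMod b)) (X.map Int.cast) = Set.univ) :
    weightedSums (unitSquares (ZMod (a * b))) (X.map Int.cast) = Set.univ := by
  set e := chineseRemainder hab
  refine Set.eq_univ_of_forall fun t ↦ ?_
  have h := mk_mem_weightedSums_prod unitSquares_prod_subset (L := X.map Int.cast)
    (t₁ := (e t).1) (t₂ := (e t).2) (by simp [Function.comp_def, ha])
    (by simp [Function.comp_def, hb])
  simpa [Function.comp_def] using map_mem_weightedSums e.symm.toRingHom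
    (mapsTo_unitSquares e.symm.toRingHom.toMonoidHom) h

theorem weightedSums_intCast_eq_univ {n : ℕ} {X : List ℤ}
    (hX : ∀ p, p.Prime → p ∣ n → 7 ≤ p ∧ 3 ≤ X.countP (fun x ↦ ¬ (p : ℤ) ∣ x)) :
    weightedSums (unitSquares (ZMod n)) (X.map Int.cast) = Set.univ := by
  induction n using Nat.recOnPosPrimePosCoprime with
  | zero => exact absurd (hX 2 Nat.prime_two (dvd_zero 2)).1 (by norm_num)
  | one => exact Set.eq_univ_of_forall fun t ↦
      Subsingleton.elim (X.map Int.cast).sum t ▸ sum_mem_weightedSums one_mem_unitSquares _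
  | prime_pow p c hp hc =>
    have := Fact.mk hp
    obtain ⟨hp7, hcount⟩ := hX p hp (dvd_pow_self p hc.ne')
    exact weightedSums_intCast_eq_univ_of_prime_pow hp7 hc.ne' hcount
  | coprime a b _ _ hab iha ihb =>
    exact weightedSums_intCast_mul_eq_univ hab
      (iha fun p hp hpa ↦ hX p hp (dvd_mul_of_dvd_left hpa b))
      (ihb fun p hp hpb ↦ hX p hp (dvd_mul_of_dvd_right hpb a))

theorem intCast_mul_mem_weightedSums_map_mul {k m : ℕ} [NeZero (k * m)] :
    ∀ {X : List ℤ} {T : ℤ}, (T : ZMod m) ∈ weightedSums (unitSquares (ZMod m)) (X.map Int.cast) →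
      ((k * T : ℤ) : ZMod (k * m)) ∈
        weightedSums (unitSquares (ZMod (k * m))) ((X.map ((k : ℤ) * ·)).map Int.cast)
  | [], T, hT => by
    simp only [List.map_nil, weightedSums, Set.mem_singleton_iff] at hT ⊢
    rw [intCast_zmod_eq_zero_iff_dvd] at hT ⊢
    exact_mod_cast mul_dvd_mul_left (k : ℤ) hT
  | x :: X, T, ⟨_, ⟨u, rfl⟩, s, hs, hT⟩ => by
    obtain ⟨v, rfl⟩ := unitsMap_surjective (dvd_mul_left m k) u
    obtain ⟨U, hU⟩ := intCast_surjective (v : ZMod (k * m))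
    have hUm : (U : ZMod m) = unitsMap (dvd_mul_left m k) v := by
      rw [unitsMap_val, ← hU, cast_intCast (dvd_mul_left m k)]
    have hs' : ((T - U ^ 2 * x : ℤ) : ZMod m) = s := by
      push_cast; rw [hUm, ← hT]; ring
    refine ⟨_, ⟨v, rfl⟩, _, intCast_mul_mem_weightedSums_map_mul (hs' ▸ hs), ?_⟩
    rw [← hU]; push_cast; ring

end ZMod

theorem exists_infix_ne_nil_zero_mem_weightedSums {n : ℕ} (hn : ∀ p, p.Prime → p ∣ n → 7 ≤ p)
    {X : List ℤ} (hX : 3 ^ Ω n ≤ X.length) :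
    ∃ l, l <:+: X ∧ l ≠ [] ∧
      (0 : ZMod n) ∈ weightedSums (unitSquares (ZMod n)) (l.map Int.cast) := by
  induction n using Nat.strong_induction_on generalizing X with
  | _ n ih =>
    by_cases hX' : ∀ p, p.Prime → p ∣ n → 3 ≤ X.countP (fun x ↦ ¬ (p : ℤ) ∣ x)
    · refine ⟨X, List.infix_refl X, List.ne_nil_of_length_pos (hX.trans_lt' (by positivity)), ?_⟩
      rw [ZMod.weightedSums_intCast_eq_univ fun p hp hpn ↦ ⟨hn p hp hpn, hX' p hp hpn⟩]
      trivial
    push Not at hX'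
    obtain ⟨p, hp, ⟨m, rfl⟩, hcount⟩ := hX'
    have hm : m ≠ 0 := by rintro rfl; exact absurd (hn 2 Nat.prime_two (dvd_zero 2)) (by norm_num)
    have : NeZero (p * m) := ⟨mul_ne_zero hp.ne_zero hm⟩
    obtain ⟨l, hlX, hlp, hlen⟩ := List.exists_infix_forall_and_length_le (P := ((p : ℤ) ∣ ·)) 2
      (L := X) (by omega)
    have hl : (l.map (· / (p : ℤ))).map ((p : ℤ) * ·) = l := by
      rw [List.map_map]
      exact (List.map_congr_left fun x hx ↦ Int.mul_ediv_cancel' (hlp x hx)).trans (List.map_id l)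
    rw [ArithmeticFunction.cardFactors_mul hp.ne_zero hm,
      ArithmeticFunction.cardFactors_apply_prime hp, pow_add] at hX
    obtain ⟨l', hl', hne, h0⟩ := ih m (lt_mul_left (Nat.pos_of_ne_zero hm) hp.one_lt)
      (fun q hq hqm ↦ hn q hq (dvd_mul_of_dvd_right hqm p)) (X := l.map (· / (p : ℤ)))
      (by rw [List.length_map]; omega)
    refine ⟨l'.map ((p : ℤ) * ·), (hl'.map _).trans (by rwa [hl]), by simpa using hne, ?_⟩
    simpa using ZMod.intCast_mul_mem_weightedSums_map_mul (k := p) (T := 0) (by simpa using h0)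

theorem C_squares_upper_bound_general (n : ℕ)
    (hdiv : ∀ p : ℕ, p.Prime → p ∣ n → 7 ≤ p) :
    ∀ L : List (ZMod n), L.length = 3 ^ n.primeFactorsList.length →
      HasConsecWZS {x : ZMod n | ∃ u : (ZMod n)ˣ, (u : ZMod n) ^ 2 = x} L := by
  intro L hL
  obtain ⟨l, ⟨l₁, l₃, hl⟩, hne, h0⟩ := exists_infix_ne_nil_zero_mem_weightedSums hdiv
    (X := L.map fun z ↦ (z.cast : ℤ)) (by simp [hL, ArithmeticFunction.cardFactors_apply])
  refine ⟨l₁.map Int.cast, l.map Int.cast, l₃.map Int.cast, ?_, by simpa using hne,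
    exists_zipWith_sum_eq_of_mem_weightedSums h0⟩
  simpa [Function.comp_def, ZMod.intCast_zmod_cast] using
    (congrArg (List.map (Int.cast : ℤ → ZMod n)) hl).symm

/-- If every prime divisor of `n ≥ 2` is at least `7`, then every sequence
of length `3^{Ω(n)}` in `Z_n` has a nonempty consecutive `U(n)²`-weighted zero-sum
subsequence, i.e. `C_{U(n)²}(n) ≤ 3^{Ω(n)}`. -/
theorem C_squares_upper_bound (n : ℕ) (hn : 2 ≤ n)
    (hdiv : ∀ p : ℕ, p.Prime → p ∣ n → 7 ≤ p) :
    ∀ L : List (ZMod n), L.length = 3 ^ n.primeFactorsList.length →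
      HasConsecWZS {x : ZMod n | ∃ u : (ZMod n)ˣ, (u : ZMod n) ^ 2 = x} L :=
  C_squares_upper_bound_general n hdiv
end
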